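/- arXiv:1409.7268 — 8 statements merged into one kernel-verified Lean document; each statement's English description precedes it below -/
import Mathlib

section
/- There exists a finitely generated group Γ that is presentable by a product, but such that for every pair of commuting infinite subgroups Γ₁, Γ₂ of Γ for which the subgroup generated by Γ₁ ∪ Γ₂ has finite index in Γ, at least one of Γ₁, Γ₂ is not finitely generated. -/
/-
Take `Γ = Heis(𝔽₂[t, t⁻¹]) ⋊ ℤ`, where the generator of `ℤ` multiplies the two non-central
coordinates of the Heisenberg group by `t` and `t⁻¹`. It is finitely generated, and its centre
`Z = {(0, 0, c)} ≅ 𝔽₂[t, t⁻¹]` is infinite, so `Z` and `Γ` present it as a product.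

Since `tⁿ - 1` is a non-zero-divisor for `n ≠ 0`, the centralizer of an element outside `Heis`
meets `Heis` only in `Z` and is abelian modulo `Z`. Let `Γ₁, Γ₂` commute. If both leave `Heis`,
then `⟨Γ₁, Γ₂⟩` lies in the preimage of the centralizer in `Γ / Z` of some `γ ∈ Γ₁ ∖ Heis`, which
has infinite index; if both lie in `Heis`, so does `⟨Γ₁, Γ₂⟩`, again of infinite index. If only
`Γ₁` leaves `Heis`, then `Γ₂ ≤ Z`, an elementary abelian `2`-group, so `Γ₂` is finite as soon as
it is finitely generated.
-/

/-- An infinite group `G` is presentable by a product if there exist two commuting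
infinite subgroups `H`, `K` of `G` such that the subgroup generated by `H ∪ K`
has finite index in `G`. -/
def PresentableByProduct (G : Type*) [Group G] : Prop :=
  ∃ H K : Subgroup G, Infinite H ∧ Infinite K ∧
    (∀ h ∈ H, ∀ k ∈ K, h * k = k * h) ∧ (H ⊔ K).FiniteIndex

open LaurentPolynomial

theorem Function.Periodic.eq_zero_of_finite_support {M : Type*} [Zero M] {f : ℤ → M} {c : ℤ}
    (hf : Function.Periodic f c) (hc : c ≠ 0) (hfin : (Function.support f).Finite) : f = 0 := by
  funext x
  by_contra hx
  refine hfin.not_infinite (Set.infinite_of_injective_forall_mem (f := fun k : ℕ => x + k * c)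
    (fun k l hkl => ?_) (fun k => ?_))
  · exact_mod_cast mul_right_cancel₀ hc (add_left_cancel hkl)
  · simpa [hf.nat_mul k x] using hx

namespace LaurentPolynomial

section Semiring

variable {R : Type*} [Semiring R]

theorem T_injective [Nontrivial R] : Function.Injective (T : ℤ → R[T;T⁻¹]) :=
  AddMonoidAlgebra.single_left_injective one_ne_zero

instance [Nontrivial R] : Infinite R[T;T⁻¹] :=
  Infinite.of_injective _ T_injective

theorem T_mul_T_neg (m : ℤ) : (T m * T (-m) : R[T;T⁻¹]) = 1 := by
  rw [← T_add, add_neg_cancel, T_zero]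

theorem T_neg_mul_T (m : ℤ) : (T (-m) * T m : R[T;T⁻¹]) = 1 := by
  rw [← T_add, neg_add_cancel, T_zero]

theorem T_neg_add (m n : ℤ) : (T (-(m + n)) : R[T;T⁻¹]) = T (-m) * T (-n) := by
  rw [neg_add, T_add]

theorem eq_zero_of_T_mul_eq_self {n : ℤ} (hn : n ≠ 0) {u : R[T;T⁻¹]} (h : T n * u = u) :
    u = 0 := by
  have hper : Function.Periodic u.coeff n := fun x =>
    calc u.coeff (x + n) = (T n * u).coeff (x + n) := by rw [h]
      _ = u.coeff x := by
        rw [T, AddMonoidAlgebra.coeff_single_mul_apply, one_mul, add_comm x, neg_add_cancel_left]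
  ext x
  exact congrFun (hper.eq_zero_of_finite_support hn u.coeff.hasFiniteSupport) x

end Semiring

theorem isLeftRegular_T_sub_one {R : Type*} [CommRing R] {n : ℤ} (hn : n ≠ 0) :
    IsLeftRegular (T n - 1 : R[T;T⁻¹]) := fun u v (h : (T n - 1) * u = (T n - 1) * v) =>
  sub_eq_zero.mp <| eq_zero_of_T_mul_eq_self hn <| by linear_combination h

theorem induction_zmod_two {motive : (ZMod 2)[T;T⁻¹] → Prop} (zero : motive 0)
    (monomial : ∀ n, motive (T n)) (add : ∀ u v, motive u → motive v → motive (u + v))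
    (u : (ZMod 2)[T;T⁻¹]) : motive u := by
  induction u using LaurentPolynomial.induction_on' with
  | add p q hp hq => exact add p q hp hq
  | C_mul_T n a =>
    obtain rfl | rfl : a = 0 ∨ a = 1 := by decide +revert
    · rwa [map_zero, zero_mul]
    · rw [map_one, one_mul]; exact monomial n

end LaurentPolynomial

theorem Subgroup.not_finiteIndex_of_injective {G α : Type*} [Group G] [Infinite α]
    {H : Subgroup G} (f : α → G) (hf : ∀ x y, (f x)⁻¹ * f y ∈ H → x = y) : ¬ H.FiniteIndex := by
  rw [Subgroup.finiteIndex_iff_finite_quotient]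
  intro
  have : Finite α := Finite.of_injective (fun x => (f x : G ⧸ H)) fun x y hxy =>
    hf x y (QuotientGroup.eq.mp hxy)
  exact not_finite α

theorem Subgroup.finite_of_fg_of_commute_of_isOfFinOrder {G : Type*} [Group G] {H : Subgroup G}
    (hH : H.FG) (hcomm : ∀ x ∈ H, ∀ y ∈ H, Commute x y) (htors : ∀ x ∈ H, IsOfFinOrder x) : Finite H := by
  let _ : CommGroup H :=
    { mul_comm := fun x y => Subtype.ext (hcomm x x.2 y y.2) }
  have : Group.FG H := (Group.fg_iff_subgroup_fg H).mpr hH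
  refine CommGroup.finite_of_fg_isMulTorsion (G := H) fun x => ?_
  rw [← orderOf_pos_iff, ← Subgroup.orderOf_coe]
  exact (htors x x.2).orderOf_pos

/-- `⟨a, b, c, n⟩` stands for the Heisenberg matrix `[[1, a, c], [0, 1, b], [0, 0, 1]]` followed by
`tⁿ`, where the generator `t` of `ℤ` acts by `(a, b, c) ↦ (T 1 * a, T (-1) * b, c)`. -/
@[ext]
structure ShiftedHeisenberg (R : Type*) [Semiring R] where
  a : R[T;T⁻¹]
  b : R[T;T⁻¹]
  c : R[T;T⁻¹]
  n : ℤ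

namespace ShiftedHeisenberg

variable {R : Type*} [CommRing R]

noncomputable instance : Mul (ShiftedHeisenberg R) :=
  ⟨fun g h => ⟨g.a + T g.n * h.a, g.b + T (-g.n) * h.b, g.c + h.c + g.a * (T (-g.n) * h.b),
    g.n + h.n⟩⟩

noncomputable instance : One (ShiftedHeisenberg R) := ⟨⟨0, 0, 0, 0⟩⟩

noncomputable instance : Inv (ShiftedHeisenberg R) :=
  ⟨fun g => ⟨-(T (-g.n) * g.a), -(T g.n * g.b), -g.c + g.a * g.b, -g.n⟩⟩

section Coordinates

variable (g h : ShiftedHeisenberg R)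

@[simp] lemma mul_a : (g * h).a = g.a + T g.n * h.a := rfl
@[simp] lemma mul_b : (g * h).b = g.b + T (-g.n) * h.b := rfl
@[simp] lemma mul_c : (g * h).c = g.c + h.c + g.a * (T (-g.n) * h.b) := rfl
@[simp] lemma mul_n : (g * h).n = g.n + h.n := rfl
@[simp] lemma one_a : (1 : ShiftedHeisenberg R).a = 0 := rfl
@[simp] lemma one_b : (1 : ShiftedHeisenberg R).b = 0 := rfl
@[simp] lemma one_c : (1 : ShiftedHeisenberg R).c = 0 := rfl
@[simp] lemma one_n : (1 : ShiftedHeisenberg R).n = 0 := rfl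
@[simp] lemma inv_a : g⁻¹.a = -(T (-g.n) * g.a) := rfl
@[simp] lemma inv_b : g⁻¹.b = -(T g.n * g.b) := rfl
@[simp] lemma inv_c : g⁻¹.c = -g.c + g.a * g.b := rfl
@[simp] lemma inv_n : g⁻¹.n = -g.n := rfl

end Coordinates

noncomputable instance : Group (ShiftedHeisenberg R) := by
  apply Group.ofLeftAxioms
  · intro g h k
    have t1 := T_add (R := R) g.n h.n
    have t2 := T_neg_add (R := R) g.n h.n
    have t3 := T_mul_T_neg (R := R) g.n
    ext : 1
    · simp only [mul_a, mul_n]; linear_combination k.a * t1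
    · simp only [mul_b, mul_n]; linear_combination k.b * t2
    · simp only [mul_a, mul_b, mul_c, mul_n]
      linear_combination ((g.a + T g.n * h.a) * k.b) * t2 + (h.a * T (-h.n) * k.b) * t3
    · simp only [mul_n]; ring
  · intro g
    ext : 1 <;> simp [T_zero]
  · intro g
    have t3 := T_neg_mul_T (R := R) g.n
    ext : 1
    · simp only [mul_a, inv_a, inv_n, one_a]; ring
    · simp only [mul_b, inv_b, inv_n, neg_neg, one_b]; ring
    · simp only [mul_c, inv_a, inv_c, inv_n, neg_neg, one_c]
      linear_combination -(g.a * g.b) * t3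
    · simp only [mul_n, inv_n, one_n]; ring

def heisenberg (R : Type*) [CommRing R] : Subgroup (ShiftedHeisenberg R) where
  carrier := {g | g.n = 0}
  one_mem' := rfl
  mul_mem' {g h} (hg : g.n = 0) (hh : h.n = 0) := by simp [hg, hh]
  inv_mem' {g} (hg : g.n = 0) := by simp [hg]

def heisenbergCenter (R : Type*) [CommRing R] : Subgroup (ShiftedHeisenberg R) where
  carrier := {g | g.a = 0 ∧ g.b = 0 ∧ g.n = 0}
  one_mem' := ⟨rfl, rfl, rfl⟩
  mul_mem' := by
    rintro g h ⟨hga, hgb, hgn⟩ ⟨hha, hhb, hhn⟩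
    simp [hga, hgb, hgn, hha, hhb, hhn]
  inv_mem' := by
    rintro g ⟨ha, hb, hn⟩
    simp [ha, hb, hn]

lemma commute_of_mem_heisenbergCenter {g : ShiftedHeisenberg R} (hg : g ∈ heisenbergCenter R)
    (h : ShiftedHeisenberg R) : Commute g h := by
  obtain ⟨ha, hb, hn⟩ := hg
  ext : 1 <;> simp [ha, hb, hn, T_zero, add_comm]

lemma sq_eq_one_of_mem_heisenbergCenter [CharP R 2] {g : ShiftedHeisenberg R}
    (hg : g ∈ heisenbergCenter R) : g ^ 2 = 1 := by
  obtain ⟨ha, hb, hn⟩ := hg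
  have hc : g.c + g.c = 0 := by
    rw [← one_smul R g.c, ← add_smul, CharTwo.add_self_eq_zero, zero_smul]
  ext <;> simp [sq, ha, hb, hn, hc]

lemma finite_of_fg_of_le_heisenbergCenter [CharP R 2] {H : Subgroup (ShiftedHeisenberg R)}
    (hH : H.FG) (hle : H ≤ heisenbergCenter R) : Finite H :=
  Subgroup.finite_of_fg_of_commute_of_isOfFinOrder hH
    (fun _ hx y _ => commute_of_mem_heisenbergCenter (hle hx) y)
    fun _ hx => isOfFinOrder_iff_pow_eq_one.mpr
      ⟨2, two_pos, sq_eq_one_of_mem_heisenbergCenter (hle hx)⟩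

lemma T_sub_one_mul_a_eq_of_commute {g h : ShiftedHeisenberg R} (hc : Commute g h) :
    (T h.n - 1) * g.a = (T g.n - 1) * h.a := by
  have h_a := congrArg a hc.eq
  simp only [mul_a] at h_a
  linear_combination -h_a

lemma T_sub_one_mul_b_eq_of_commute {g h : ShiftedHeisenberg R} (hc : Commute g h) :
    (T (-h.n) - 1) * g.b = (T (-g.n) - 1) * h.b := by
  have h_b := congrArg b hc.eq
  simp only [mul_b] at h_b
  linear_combination -h_b

lemma mem_heisenbergCenter_of_commute {γ h : ShiftedHeisenberg R} (hγ : γ.n ≠ 0)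
    (hc : Commute γ h) (hh : h ∈ heisenberg R) : h ∈ heisenbergCenter R := by
  have hn : h.n = 0 := hh
  refine ⟨isLeftRegular_T_sub_one hγ ?_, isLeftRegular_T_sub_one (neg_ne_zero.mpr hγ) ?_, hn⟩
  · simpa [hn, T_zero] using T_sub_one_mul_a_eq_of_commute hc.symm
  · simpa [hn, T_zero] using T_sub_one_mul_b_eq_of_commute hc.symm

-- The elements `g` such that `g * γ` and `γ * g` differ only in the central coordinate `c`.
def centralizerModCenter (γ : ShiftedHeisenberg R) : Subgroup (ShiftedHeisenberg R) where
  carrier := {g | (T γ.n - 1) * g.a = (T g.n - 1) * γ.a ∧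
    (T (-γ.n) - 1) * g.b = (T (-g.n) - 1) * γ.b}
  one_mem' := by simp [T_zero]
  mul_mem' := by
    rintro g h ⟨hga, hgb⟩ ⟨hha, hhb⟩
    constructor
    · simp only [mul_a, mul_n]
      linear_combination hga + T g.n * hha - γ.a * T_add (R := R) g.n h.n
    · simp only [mul_b, mul_n]
      linear_combination hgb + T (-g.n) * hhb - γ.b * T_neg_add (R := R) g.n h.n
  inv_mem' := by
    rintro g ⟨hga, hgb⟩
    constructor
    · simp only [inv_a, inv_n]
      linear_combination (-(T (-g.n))) * hga - γ.a * T_neg_mul_T (R := R) g.n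
    · simp only [inv_b, inv_n, neg_neg]
      linear_combination (-(T g.n)) * hgb - γ.b * T_mul_T_neg (R := R) g.n

lemma mem_centralizerModCenter_of_commute {γ g : ShiftedHeisenberg R} (hc : Commute g γ) :
    g ∈ centralizerModCenter γ :=
  ⟨T_sub_one_mul_a_eq_of_commute hc, T_sub_one_mul_b_eq_of_commute hc⟩

-- The centralizer of `δ` is abelian modulo the centre, since `T δ.n - 1` is a non-zero-divisor.
lemma mem_centralizerModCenter_of_commute_of_commute {γ δ g : ShiftedHeisenberg R} (hδ : δ.n ≠ 0)
    (hγ : Commute γ δ) (hg : Commute g δ) : g ∈ centralizerModCenter γ := by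
  constructor
  · refine isLeftRegular_T_sub_one hδ ?_
    linear_combination (T γ.n - 1) * T_sub_one_mul_a_eq_of_commute hg -
      (T g.n - 1) * T_sub_one_mul_a_eq_of_commute hγ
  · refine isLeftRegular_T_sub_one (neg_ne_zero.mpr hδ) ?_
    linear_combination (T (-γ.n) - 1) * T_sub_one_mul_b_eq_of_commute hg -
      (T (-g.n) - 1) * T_sub_one_mul_b_eq_of_commute hγ

lemma not_finiteIndex_heisenberg : ¬ (heisenberg R).FiniteIndex :=
  Subgroup.not_finiteIndex_of_injective (fun k : ℤ => (⟨0, 0, 0, k⟩ : ShiftedHeisenberg R))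
    fun k l (h : -k + l = 0) => by omega

section Nontrivial

variable [Nontrivial R]

lemma not_finiteIndex_centralizerModCenter {γ : ShiftedHeisenberg R} (hγ : γ.n ≠ 0) :
    ¬ (centralizerModCenter γ).FiniteIndex :=
  Subgroup.not_finiteIndex_of_injective (fun u => (⟨u, 0, 0, 0⟩ : ShiftedHeisenberg R))
    fun u v ⟨h, _⟩ => isLeftRegular_T_sub_one hγ <| by
      simp only [mul_a, inv_a, inv_n, mul_n, add_zero, neg_zero, T_zero, one_mul, sub_self,
        zero_mul] at h
      linear_combination -h

instance : Infinite (heisenbergCenter R) :=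
  Infinite.of_injective (fun u => (⟨⟨0, 0, u, 0⟩, rfl, rfl, rfl⟩ : heisenbergCenter R))
    fun _ _ h => congrArg (fun g : heisenbergCenter R => g.1.c) h

instance : Infinite (ShiftedHeisenberg R) :=
  Infinite.of_injective (fun u => (⟨0, 0, u, 0⟩ : ShiftedHeisenberg R)) fun _ _ h => congrArg c h

theorem presentableByProduct : PresentableByProduct (ShiftedHeisenberg R) := by
  refine ⟨heisenbergCenter R, ⊤, inferInstance, ?_,
    fun _ hh k _ => commute_of_mem_heisenbergCenter hh k, ?_⟩
  · exact Infinite.of_injective (fun g => (⟨g, trivial⟩ : (⊤ : Subgroup _)))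
      fun _ _ h => congrArg Subtype.val h
  · rw [sup_top_eq]
    infer_instance

end Nontrivial

lemma shift_zpow (k : ℤ) : (⟨0, 0, 0, 1⟩ : ShiftedHeisenberg R) ^ k = ⟨0, 0, 0, k⟩ := by
  induction k using Int.induction_on with
  | zero => rfl
  | succ k ih => rw [zpow_add_one, ih]; ext : 1 <;> simp
  | pred k ih => rw [zpow_sub_one, ih]; ext : 1 <;> simp [sub_eq_add_neg]

lemma mk_a_add (u v : R[T;T⁻¹]) :
    (⟨u + v, 0, 0, 0⟩ : ShiftedHeisenberg R) = ⟨u, 0, 0, 0⟩ * ⟨v, 0, 0, 0⟩ := by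
  ext : 1 <;> simp

lemma mk_b_add (u v : R[T;T⁻¹]) :
    (⟨0, u + v, 0, 0⟩ : ShiftedHeisenberg R) = ⟨0, u, 0, 0⟩ * ⟨0, v, 0, 0⟩ := by
  ext : 1 <;> simp

lemma shift_conj_mk_a (k : ℤ) (u : R[T;T⁻¹]) :
    (⟨0, 0, 0, k⟩ * ⟨u, 0, 0, 0⟩ * ⟨0, 0, 0, -k⟩ : ShiftedHeisenberg R) = ⟨T k * u, 0, 0, 0⟩ := by
  ext : 1 <;> simp

lemma shift_conj_mk_b (k : ℤ) (u : R[T;T⁻¹]) :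
    (⟨0, 0, 0, -k⟩ * ⟨0, u, 0, 0⟩ * ⟨0, 0, 0, k⟩ : ShiftedHeisenberg R) = ⟨0, T k * u, 0, 0⟩ := by
  ext : 1 <;> simp

lemma mk_a_mul_mk_b_mul_inv (u v : R[T;T⁻¹]) :
    (⟨u, 0, 0, 0⟩ * ⟨0, v, 0, 0⟩ * (⟨0, v, 0, 0⟩ * ⟨u, 0, 0, 0⟩)⁻¹ : ShiftedHeisenberg R) =
      ⟨0, 0, u * v, 0⟩ := by
  ext : 1 <;> simp [T_zero]

lemma eq_mk_a_mul_mk_b_mul_mk_c_mul_shift (g : ShiftedHeisenberg R) :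
    g = ⟨g.a, 0, 0, 0⟩ * ⟨0, g.b, 0, 0⟩ * ⟨0, 0, g.c - g.a * g.b, 0⟩ * ⟨0, 0, 0, g.n⟩ := by
  ext : 1 <;> simp [T_zero]

lemma eq_top_of_forall_mk_mem {W : Subgroup (ShiftedHeisenberg R)}
    (ha : ∀ u, (⟨u, 0, 0, 0⟩ : ShiftedHeisenberg R) ∈ W)
    (hb : ∀ u, (⟨0, u, 0, 0⟩ : ShiftedHeisenberg R) ∈ W)
    (hn : ∀ k, (⟨0, 0, 0, k⟩ : ShiftedHeisenberg R) ∈ W) : W = ⊤ := by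
  refine (Subgroup.eq_top_iff' W).mpr fun g => ?_
  have hc : (⟨0, 0, g.c - g.a * g.b, 0⟩ : ShiftedHeisenberg R) ∈ W := by
    rw [← mul_one (g.c - g.a * g.b), ← mk_a_mul_mk_b_mul_inv]
    exact mul_mem (mul_mem (ha _) (hb 1)) (inv_mem (mul_mem (hb 1) (ha _)))
  rw [eq_mk_a_mul_mk_b_mul_mk_c_mul_shift g]
  exact mul_mem (mul_mem (mul_mem (ha g.a) (hb g.b)) hc) (hn g.n)

theorem fg : Group.FG (ShiftedHeisenberg (ZMod 2)) := by
  rw [Group.fg_iff]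
  refine ⟨{⟨1, 0, 0, 0⟩, ⟨0, 1, 0, 0⟩, ⟨0, 0, 0, 1⟩}, ?_, Set.toFinite _⟩
  set W := Subgroup.closure
    ({⟨1, 0, 0, 0⟩, ⟨0, 1, 0, 0⟩, ⟨0, 0, 0, 1⟩} : Set (ShiftedHeisenberg (ZMod 2)))
  have hn : ∀ k : ℤ, (⟨0, 0, 0, k⟩ : ShiftedHeisenberg (ZMod 2)) ∈ W := fun k =>
    shift_zpow (R := ZMod 2) k ▸ zpow_mem (Subgroup.subset_closure (by simp)) k
  refine eq_top_of_forall_mk_mem ?_ ?_ hn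
  · refine induction_zmod_two (one_mem W) (fun k => ?_)
      fun u v hu hv => mk_a_add u v ▸ mul_mem hu hv
    have h1 : (⟨1, 0, 0, 0⟩ : ShiftedHeisenberg (ZMod 2)) ∈ W := Subgroup.subset_closure (by simp)
    rw [← mul_one (T k), ← shift_conj_mk_a]
    exact mul_mem (mul_mem (hn k) h1) (hn (-k))
  · refine induction_zmod_two (one_mem W) (fun k => ?_)
      fun u v hu hv => mk_b_add u v ▸ mul_mem hu hv
    have h1 : (⟨0, 1, 0, 0⟩ : ShiftedHeisenberg (ZMod 2)) ∈ W := Subgroup.subset_closure (by simp)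
    rw [← mul_one (T k), ← shift_conj_mk_b]
    exact mul_mem (mul_mem (hn (-k)) h1) (hn k)

theorem not_fg_or_not_fg_of_commute [CharP R 2] {Γ₁ Γ₂ : Subgroup (ShiftedHeisenberg R)}
    [Infinite Γ₁] [Infinite Γ₂] [(Γ₁ ⊔ Γ₂).FiniteIndex]
    (hcomm : ∀ g₁ ∈ Γ₁, ∀ g₂ ∈ Γ₂, Commute g₁ g₂) : ¬ Γ₁.FG ∨ ¬ Γ₂.FG := by
  have := CharP.nontrivial_of_char_ne_one (R := R) (v := 2) (by norm_num)
  rw [← not_and_or]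
  rintro ⟨hfg₁, hfg₂⟩
  by_cases h₁ : Γ₁ ≤ heisenberg R <;> by_cases h₂ : Γ₂ ≤ heisenberg R
  · exact not_finiteIndex_heisenberg (Subgroup.finiteIndex_of_le (sup_le h₁ h₂))
  · obtain ⟨δ, hδ, hδn⟩ := SetLike.not_le_iff_exists.mp h₂
    refine (finite_of_fg_of_le_heisenbergCenter hfg₁ fun g hg => ?_).not_infinite ‹_›
    exact mem_heisenbergCenter_of_commute hδn (hcomm g hg δ hδ).symm (h₁ hg)
  · obtain ⟨γ, hγ, hγn⟩ := SetLike.not_le_iff_exists.mp h₁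
    refine (finite_of_fg_of_le_heisenbergCenter hfg₂ fun g hg => ?_).not_infinite ‹_›
    exact mem_heisenbergCenter_of_commute hγn (hcomm γ hγ g hg) (h₂ hg)
  · obtain ⟨γ, hγ, hγn⟩ := SetLike.not_le_iff_exists.mp h₁
    obtain ⟨δ, hδ, hδn⟩ := SetLike.not_le_iff_exists.mp h₂
    have hle : Γ₁ ⊔ Γ₂ ≤ centralizerModCenter γ := sup_le
      (fun g hg => mem_centralizerModCenter_of_commute_of_commute hδn (hcomm γ hγ δ hδ)
        (hcomm g hg δ hδ))
      (fun g hg => mem_centralizerModCenter_of_commute (hcomm γ hγ g hg).symm)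
    exact not_finiteIndex_centralizerModCenter hγn (Subgroup.finiteIndex_of_le hle)

end ShiftedHeisenberg

theorem stmt_1 :
    ∃ (Γ : Type) (_ : Group Γ), Group.FG Γ ∧ PresentableByProduct Γ ∧
      ∀ Γ₁ Γ₂ : Subgroup Γ, Infinite Γ₁ → Infinite Γ₂ →
        (∀ g₁ ∈ Γ₁, ∀ g₂ ∈ Γ₂, g₁ * g₂ = g₂ * g₁) →
        (Γ₁ ⊔ Γ₂).FiniteIndex → ¬ Γ₁.FG ∨ ¬ Γ₂.FG :=
  ⟨ShiftedHeisenberg (ZMod 2), inferInstance, ShiftedHeisenberg.fg,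
    ShiftedHeisenberg.presentableByProduct,
    fun Γ₁ Γ₂ _ _ hcomm _ =>
      ShiftedHeisenberg.not_fg_or_not_fg_of_commute (Γ₁ := Γ₁) (Γ₂ := Γ₂) hcomm⟩
end

section
/- Let Γ be a group and let F be a finite normal subgroup of Γ. Then the quotient Γ/F is a Schreier group if and only if Γ is a Schreier group. -/
/-!
The quotient map `Γ → Γ ⧸ F` is a surjection with finite kernel. Along such a map, images and
preimages of finitely generated normal subgroups are again finitely generated and normal (the
preimage is generated by lifts of generators together with the finite kernel), and a normal
subgroup is finite, resp. of finite index, exactly when its image is.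
-/

/-- A group is a Schreier group if every finitely generated normal subgroup is
either finite or of finite index. -/
def IsSchreierGroup (G : Type*) [Group G] : Prop :=
  ∀ N : Subgroup G, N.Normal → N.FG → (Finite N ∨ N.FiniteIndex)

namespace Subgroup

variable {G H : Type*} [Group G] [Group H]

theorem FG.map {N : Subgroup G} (hN : N.FG) (f : G →* H) : (N.map f).FG := by
  obtain ⟨S, rfl, hS⟩ := (fg_iff N).mp hN
  exact (fg_iff _).mpr ⟨f '' S, (MonoidHom.map_closure f S).symm, hS.image f⟩

theorem FG.comap_of_surjective {K : Subgroup H} (hK : K.FG) {f : G →* H}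
    (hf : Function.Surjective f) (hker : f.ker.FG) : (K.comap f).FG := by
  obtain ⟨S, rfl, hS⟩ := (fg_iff K).mp hK
  obtain ⟨T, -, hT, hTS⟩ := Set.exists_subset_image_finite_and.mp
    ⟨S, (Set.image_univ_of_surjective hf).symm ▸ Set.subset_univ S, hS, rfl⟩
  rw [hTS, ← MonoidHom.map_closure, comap_map_eq]
  exact ((fg_iff _).mpr ⟨T, rfl, hT⟩).sup hker

theorem finite_of_finite_map {f : G →* H} [Finite f.ker] {N : Subgroup G}
    (hN : Finite (N.map f)) : Finite N := by
  refine (f.subgroupMap N).finite_iff_finite_ker_range.mpr ⟨?_, inferInstance⟩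
  rw [ker_subgroupMap]
  exact Finite.of_injective (fun x ↦ (⟨x.1, x.2⟩ : f.ker)) fun x y hxy ↦
    Subtype.ext (Subtype.ext (congrArg (fun z : f.ker ↦ (z : G)) hxy))

theorem finiteIndex_of_finiteIndex_map {f : G →* H} (hf : Function.Surjective f) [Finite f.ker]
    {N : Subgroup G} [N.Normal] (hN : (N.map f).FiniteIndex) : N.FiniteIndex := by
  have hsup : (N ⊔ f.ker).index ≠ 0 := by
    simpa [index_map, f.range_eq_top_of_surjective hf] using hN.index_ne_zero
  -- Second isomorphism theorem: `[N ⊔ ker f : N] = [ker f : N ⊓ ker f]`.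
  have hrel : N.relIndex (N ⊔ f.ker) ≠ 0 := by
    rw [sup_comm, relIndex_sup_right]
    exact index_ne_zero_of_finite (H := N.subgroupOf f.ker)
  rw [finiteIndex_iff, ← relIndex_mul_index (le_sup_left : N ≤ N ⊔ f.ker)]
  exact mul_ne_zero hrel hsup

end Subgroup

namespace IsSchreierGroup

variable {G H : Type*} [Group G] [Group H]

theorem of_surjective {f : G →* H} (hf : Function.Surjective f) (hker : f.ker.FG)
    (hG : IsSchreierGroup G) : IsSchreierGroup H := by
  intro K hK hKfg
  rcases hG (K.comap f) (hK.comap f) (hKfg.comap_of_surjective hf hker) with hfin | hind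
  · left
    rw [← Subgroup.map_comap_eq_self_of_surjective hf K]
    exact Finite.of_surjective _ (f.subgroupMap_surjective _)
  · exact .inr ⟨Subgroup.index_comap_of_surjective K hf ▸ hind.index_ne_zero⟩

theorem of_surjective_of_finite_ker {f : G →* H} (hf : Function.Surjective f) [Finite f.ker]
    (hH : IsSchreierGroup H) : IsSchreierGroup G := by
  intro N hN hNfg
  rcases hH (N.map f) (hN.map f hf) (hNfg.map f) with hfin | hind
  · exact .inl (Subgroup.finite_of_finite_map hfin)
  · exact .inr (Subgroup.finiteIndex_of_finiteIndex_map hf hind)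

end IsSchreierGroup

theorem stmt_4 (Γ : Type*) [Group Γ] (F : Subgroup Γ) [F.Normal] (h : Finite F) :
    IsSchreierGroup (Γ ⧸ F) ↔ IsSchreierGroup Γ := by
  have hker : (QuotientGroup.mk' F).ker = F := QuotientGroup.ker_mk' F
  have : Finite (QuotientGroup.mk' F).ker := hker.symm ▸ h
  refine ⟨.of_surjective_of_finite_ker (QuotientGroup.mk'_surjective F),
    .of_surjective (QuotientGroup.mk'_surjective F) ?_⟩
  rw [hker, ← Group.fg_iff_subgroup_fg]
  infer_instance
end

section
/- Let k be a field of characteristic zero and let L be a Lie algebra over k admitting a basis {e, g} (so L is two-dimensional) with ⁅g, e⁆ = e. Then L is not presentable by a product. -/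
/-!
If `L = g₁ + g₂` with `g₁`, `g₂` commuting, then `g₁ ∩ g₂` is central. In the algebra with
`⁅g, e⁆ = e` the bracket is `⁅u, v⁆ = det (v, u) • e`, so commuting elements are proportional:
nonzero `x ∈ g₁`, `y ∈ g₂` give `y ∈ k x ⊆ g₁`, a nonzero central element. But every element
commuting with a nonzero `y` is a multiple of `y`, which would make `L` abelian.
-/

/-- A Lie algebra `L` over `k` is presentable by a product if there exist two nonzero
Lie subalgebras `g₁`, `g₂` of `L` which commute elementwise and with `g₁ + g₂ = L`. -/
def LiePresentableByProduct (k L : Type*) [CommRing k] [LieRing L] [LieAlgebra k L] : Prop :=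
  ∃ g₁ g₂ : LieSubalgebra k L, g₁ ≠ ⊥ ∧ g₂ ≠ ⊥ ∧
    (∀ x ∈ g₁, ∀ y ∈ g₂, ⁅x, y⁆ = 0) ∧
    (g₁ : Submodule k L) ⊔ (g₂ : Submodule k L) = ⊤

section PresentableByProduct

variable {k L : Type*} [CommRing k] [LieRing L] [LieAlgebra k L]

lemma lie_eq_zero_of_mem_inf {g₁ g₂ : LieSubalgebra k L}
    (hcomm : ∀ x ∈ g₁, ∀ y ∈ g₂, ⁅x, y⁆ = 0)
    (hsup : (g₁ : Submodule k L) ⊔ (g₂ : Submodule k L) = ⊤)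
    {x : L} (hx₁ : x ∈ g₁) (hx₂ : x ∈ g₂) (w : L) : ⁅x, w⁆ = 0 := by
  obtain ⟨u, hu, v, hv, rfl⟩ := Submodule.mem_sup.mp (hsup ▸ Submodule.mem_top : w ∈ _)
  rw [lie_add, ← lie_skew, hcomm u hu x hx₂, neg_zero, hcomm x hx₁ v hv, add_zero]

theorem not_liePresentableByProduct_of_exists_smul_eq_of_lie_eq_zero
    (hprop : ∀ x y : L, x ≠ 0 → ⁅x, y⁆ = 0 → ∃ a : k, a • x = y)
    (u v : L) (huv : ⁅u, v⁆ ≠ 0) : ¬ LiePresentableByProduct k L := by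
  rintro ⟨g₁, g₂, h₁, h₂, hcomm, hsup⟩
  obtain ⟨x, hx₁, hx⟩ : ∃ x ∈ g₁, x ≠ 0 := by
    simpa using (LieSubalgebra.eq_bot_iff g₁).not.mp h₁
  obtain ⟨y, hy₂, hy⟩ : ∃ y ∈ g₂, y ≠ 0 := by
    simpa using (LieSubalgebra.eq_bot_iff g₂).not.mp h₂
  obtain ⟨a, rfl⟩ := hprop x y hx (hcomm x hx₁ y hy₂)
  have hcentral := lie_eq_zero_of_mem_inf hcomm hsup (g₁.smul_mem a hx₁) hy₂
  obtain ⟨c, rfl⟩ := hprop _ u hy (hcentral u)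
  obtain ⟨d, rfl⟩ := hprop _ v hy (hcentral v)
  exact huv (by rw [smul_lie, lie_smul, lie_self, smul_zero, smul_zero])

end PresentableByProduct

section TwoDimensional

variable {k L : Type*} [Field k] [LieRing L] [LieAlgebra k L]
  (b : Module.Basis (Fin 2) k L) (hb : ⁅b 1, b 0⁆ = b 0)

include hb in
lemma lie_eq_det_smul (u v : L) : ⁅u, v⁆ = b.det ![v, u] • b 0 := by
  have h01 : ⁅b 0, b 1⁆ = -b 0 := by rw [← lie_skew, hb]
  conv_lhs => rw [← b.sum_repr u, ← b.sum_repr v]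
  simp only [Fin.sum_univ_two, lie_add, add_lie, lie_smul, smul_lie, lie_self, hb, h01,
    Module.Basis.det_apply, Matrix.det_fin_two, Module.Basis.toMatrix_apply, Matrix.cons_val_zero,
    Matrix.cons_val_one, smul_zero, smul_neg, smul_smul, add_zero, zero_add, sub_smul]
  ring_nf
  abel

include hb in
lemma exists_smul_eq_of_lie_eq_zero {x y : L} (hx : x ≠ 0) (hxy : ⁅x, y⁆ = 0) :
    ∃ a : k, a • x = y := by
  by_contra! hdep
  have hli : LinearIndependent k ![x, y] := (LinearIndependent.pair_iff' hx).mpr hdep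
  have hspan := hli.span_eq_top_of_card_eq_finrank (Module.finrank_eq_card_basis b).symm
  have hdet : b.det ![x, y] ≠ 0 := ((b.is_basis_iff_det).mp ⟨hli, hspan⟩).ne_zero
  refine smul_ne_zero hdet (b.ne_zero 0) ?_
  rw [← lie_eq_det_smul b hb, ← lie_skew, hxy, neg_zero]

end TwoDimensional

theorem stmt_8_general (k L : Type*) [Field k] [LieRing L] [LieAlgebra k L]
    (b : Module.Basis (Fin 2) k L) (hb : ⁅b 1, b 0⁆ = b 0) :
    ¬ LiePresentableByProduct k L :=
  not_liePresentableByProduct_of_exists_smul_eq_of_lie_eq_zero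
    (fun _ _ hx hxy => exists_smul_eq_of_lie_eq_zero b hb hx hxy) (b 1) (b 0)
    (by rw [hb]; exact b.ne_zero 0)

/-- the two-dimensional non-abelian soluble Lie algebra `af` with basis
`{e, g}`, `⁅g, e⁆ = e`, is not presentable by a product. -/
theorem stmt_8 (k L : Type*) [Field k] [CharZero k] [LieRing L] [LieAlgebra k L]
    (b : Module.Basis (Fin 2) k L) (hb : ⁅b 1, b 0⁆ = b 0) :
    ¬ LiePresentableByProduct k L :=
  stmt_8_general k L b hb
end

section
/- Let k be a field of characteristic zero and let L be a Lie algebra over k admitting a basis {e, f, g} (so L is three-dimensional) with ⁅g, e⁆ = e, ⁅g, f⁆ = −f and ⁅e, f⁆ = 0. Then L is not presentable by a product. -/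
open Module LieAlgebra

theorem isLieAbelian_of_finrank_eq_one {K M : Type*} [Field K] [LieRing M] [LieAlgebra K M]
    (h : finrank K M = 1) : IsLieAbelian M := by
  obtain ⟨v, -, hv⟩ := finrank_eq_one_iff'.mp h
  refine ⟨fun x y => ?_⟩
  obtain ⟨a, rfl⟩ := hv x
  obtain ⟨c, rfl⟩ := hv y
  rw [smul_lie, lie_smul, lie_self, smul_zero, smul_zero]

section ProductPresentation

variable {k L : Type*} [CommRing k] [LieRing L] [LieAlgebra k L]

theorem mem_center_of_sup_eq_top {A B : Submodule k L} (hAB : A ⊔ B = ⊤) {x : L}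
    (hA : ∀ y ∈ A, ⁅y, x⁆ = 0) (hB : ∀ y ∈ B, ⁅y, x⁆ = 0) : x ∈ center k L := by
  refine (LieModule.mem_maxTrivSubmodule k L L x).mpr fun y => ?_
  have hy : y ∈ A ⊔ B := hAB ▸ Submodule.mem_top
  obtain ⟨a, ha, b, hb, rfl⟩ := Submodule.mem_sup.mp hy
  rw [add_lie, hA a ha, hB b hb, add_zero]

variable {g₁ g₂ : LieSubalgebra k L} (hcomm : ∀ x ∈ g₁, ∀ y ∈ g₂, ⁅x, y⁆ = 0)
  (hsup : (g₁ : Submodule k L) ⊔ g₂ = ⊤)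
include hcomm hsup

theorem inf_le_center_of_commute :
    (g₁ : Submodule k L) ⊓ g₂ ≤ (center k L : Submodule k L) := fun x ⟨hx₁, hx₂⟩ =>
  mem_center_of_sup_eq_top hsup (fun y hy => hcomm y hy x hx₂)
    (fun y hy => by rw [← lie_skew, hcomm x hx₁ y hy, neg_zero])

theorem le_center_of_commute_of_isLieAbelian [IsLieAbelian g₁] :
    (g₁ : Submodule k L) ≤ (center k L : Submodule k L) := fun x hx =>
  mem_center_of_sup_eq_top hsup
    (fun y hy => congrArg Subtype.val (trivial_lie_zero g₁ g₁ ⟨y, hy⟩ ⟨x, hx⟩))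
    (fun y hy => by rw [← lie_skew, hcomm x hx y hy, neg_zero])

end ProductPresentation

theorem not_liePresentableByProduct_of_center_eq_bot {K L : Type*} [Field K] [LieRing L]
    [LieAlgebra K L] [FiniteDimensional K L] (hcenter : center K L = ⊥) (hdim : finrank K L ≤ 3) :
    ¬ LiePresentableByProduct K L := by
  rintro ⟨g₁, g₂, h₁, h₂, hcomm, hsup⟩
  have hline : finrank K g₁ = 1 ∨ finrank K g₂ = 1 := by
    have hinf : (g₁ : Submodule K L) ⊓ g₂ = ⊥ := by
      simpa [hcenter] using inf_le_center_of_commute hcomm hsup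
    have hsum := Submodule.finrank_sup_add_finrank_inf_eq (g₁ : Submodule K L) g₂
    rw [hsup, hinf, finrank_top, finrank_bot, add_zero] at hsum
    have hpos : ∀ g : LieSubalgebra K L, g ≠ ⊥ → 0 < finrank K g := fun g hg =>
      Nat.pos_of_ne_zero fun h => hg <| (LieSubalgebra.toSubmodule_eq_bot g).mp <|
        Submodule.finrank_eq_zero.mp h
    have := hpos g₁ h₁
    have := hpos g₂ h₂
    change finrank K L = finrank K g₁ + finrank K g₂ at hsum
    omega
  wlog h : finrank K g₁ = 1 generalizing g₁ g₂
  · refine this g₂ g₁ h₂ h₁ (fun x hx y hy => ?_) (sup_comm (g₁ : Submodule K L) g₂ ▸ hsup)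
      hline.symm (hline.resolve_left h)
    rw [← lie_skew, hcomm y hy x hx, neg_zero]
  have := isLieAbelian_of_finrank_eq_one h
  apply h₁
  rw [← LieSubalgebra.toSubmodule_eq_bot, eq_bot_iff]
  simpa [hcenter] using le_center_of_commute_of_isLieAbelian hcomm hsup

theorem center_eq_bot_of_basis {k L : Type*} [CommRing k] [LieRing L] [LieAlgebra k L]
    (b : Basis (Fin 3) k L) (hge : ⁅b 2, b 0⁆ = b 0) (hgf : ⁅b 2, b 1⁆ = -b 1) :
    center k L = ⊥ := by
  refine (LieSubmodule.eq_bot_iff _).mpr fun x hx => ?_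
  have hx := (LieModule.mem_maxTrivSubmodule k L L x).mp hx
  obtain ⟨α, β, γ, rfl⟩ : ∃ α β γ : k, x = α • b 0 + β • b 1 + γ • b 2 :=
    ⟨_, _, _, by rw [← Fin.sum_univ_three (fun i => b.repr x i • b i), b.sum_repr]⟩
  have hg : α • b 0 - β • b 1 = 0 := by
    simpa [hge, hgf, sub_eq_add_neg] using hx (b 2)
  have hα : α = 0 := by simpa using congrArg (fun v => b.repr v 0) hg
  have hβ : β = 0 := by simpa using congrArg (fun v => b.repr v 1) hg
  subst hα hβ
  have he : γ • b 0 = 0 := by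
    simpa [← lie_skew (b 0), hge] using hx (b 0)
  have hγ : γ = 0 := by simpa using congrArg (fun v => b.repr v 0) he
  simp [hγ]

theorem stmt_9_general (k L : Type*) [Field k] [LieRing L] [LieAlgebra k L]
    (b : Module.Basis (Fin 3) k L)
    (hge : ⁅b 2, b 0⁆ = b 0) (hgf : ⁅b 2, b 1⁆ = -b 1) :
    ¬ LiePresentableByProduct k L :=
  have := Module.Finite.of_basis b
  not_liePresentableByProduct_of_center_eq_bot (center_eq_bot_of_basis b hge hgf)
    (by rw [finrank_eq_card_basis b, Fintype.card_fin])

/-- the three-dimensional Lie algebra `sol` with basis `{e, f, g}`,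
`⁅g, e⁆ = e`, `⁅g, f⁆ = -f`, `⁅e, f⁆ = 0`, is not presentable by a product. -/
theorem stmt_9 (k L : Type*) [Field k] [CharZero k] [LieRing L] [LieAlgebra k L]
    (b : Module.Basis (Fin 3) k L)
    (hge : ⁅b 2, b 0⁆ = b 0) (hgf : ⁅b 2, b 1⁆ = -b 1) (hef : ⁅b 0, b 1⁆ = 0) :
    ¬ LiePresentableByProduct k L :=
  stmt_9_general k L b hge hgf
end

section
/- Let Γ be a group that has a subgroup of finite index isomorphic to F_k × ℤ for some k ≥ 2, where F_k is the free group on k generators. Then Γ has a normal subgroup that is infinite cyclic (isomorphic to ℤ). -/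
/-!
Let `N` be the normal core of `H`; it has finite index in `Γ`, and its centre is characteristic
in `N`, hence normal in `Γ`. Inside `F_k × ℤ`, the group `N` contains `(a^m, 1)`, `(b^n, 1)` and
`(1, t^d)` for two free generators `a ≠ b` and some `m, n, d > 0`. An element of `F_k` commuting
with `a^m` is a power of `a`, so one commuting with both `a^m` and `b^n` is trivial. Hence the
projection to `ℤ` is injective on the centre of `N`, whose image is a nonzero subgroup of `ℤ`
(it contains `d`), i.e. infinite cyclic.
-/

namespace FreeGroup

variable {α : Type*}

/-- `a ^ m * w` is reduced as written, while `w * a ^ m` is no longer than `w ++ a ^ m`; if they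
are equal, the two words coincide and so do their first letters. -/
theorem fst_eq_of_commute_pow_of_isReduced [DecidableEq α] {a c : α} {s : Bool}
    {t : List (α × Bool)} {m : ℕ} (hm : 0 < m) (hL : IsReduced ((c, s) :: t))
    (hc : Commute (mk ((c, s) :: t)) (of a ^ m)) : c = a := by
  by_contra hca
  have hrep : IsReduced (List.replicate m (a, true)) := toWord_of_pow a m ▸ isReduced_toWord
  have hleft : (of a ^ m * mk ((c, s) :: t)).toWord =
      List.replicate m (a, true) ++ (c, s) :: t := by
    rw [← mk_toWord (x := of a ^ m), toWord_of_pow, mul_mk, toWord_mk, IsReduced.reduce_eq]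
    refine List.isChain_append.mpr ⟨hrep, hL, fun x hx y hy hxy ↦ ?_⟩
    simp only [List.getLast?_replicate, hm.ne', if_false, Option.mem_some_iff] at hx
    simp only [List.head?_cons, Option.mem_some_iff] at hy
    subst hx hy
    exact absurd hxy.symm hca
  have hright := toWord_mul_sublist (mk ((c, s) :: t)) (of a ^ m)
  rw [hc, hleft, toWord_of_pow, toWord_mk, hL.reduce_eq] at hright
  have hhead := congrArg List.head? (hright.eq_of_length (by simp; omega))
  obtain ⟨m, rfl⟩ := Nat.exists_eq_add_of_lt hm
  simp only [List.replicate_succ, List.cons_append, List.head?_cons, Option.some.injEq,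
    Prod.mk.injEq] at hhead
  exact hca hhead.1.symm

theorem mem_zpowers_of_commute_of_pow {a : α} {m : ℕ} (hm : 0 < m) {w : FreeGroup α}
    (h : Commute w (of a ^ m)) : w ∈ Subgroup.zpowers (of a) := by
  classical
  suffices ∀ L : List (α × Bool), IsReduced L → Commute (mk L) (of a ^ m) →
      mk L ∈ Subgroup.zpowers (of a) by
    simpa only [mk_toWord] using this w.toWord isReduced_toWord (by rwa [mk_toWord])
  intro L
  induction L with
  | nil => exact fun _ _ ↦ Subgroup.one_mem _
  | cons x t ih =>
    obtain ⟨c, s⟩ := x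
    intro hL hc
    obtain rfl := fst_eq_of_commute_pow_of_isReduced hm hL hc
    have hx : mk [(c, s)] ∈ Subgroup.zpowers (of c) := by
      cases s
      · have : mk [(c, false)] = (of c)⁻¹ := by simp [of, inv_mk, invRev]
        exact this ▸ Subgroup.inv_mem _ (Subgroup.mem_zpowers (of c))
      · exact Subgroup.mem_zpowers (of c)
    obtain ⟨j, hj⟩ := Subgroup.mem_zpowers_iff.mp hx
    have hxc : Commute (mk [(c, s)]) (of c ^ m) :=
      hj ▸ ((Commute.refl (of c)).zpow_left j).pow_right m
    rw [← List.singleton_append, ← mul_mk] at hc ⊢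
    refine Subgroup.mul_mem _ hx (ih hL.tail ?_)
    simpa only [inv_mul_cancel_left] using hxc.inv_left.mul_left hc

theorem eq_one_of_commute_pow_of_commute_pow {a b : α} (hab : a ≠ b) {m n : ℕ} (hm : 0 < m)
    (hn : 0 < n) {w : FreeGroup α} (ha : Commute w (of a ^ m)) (hb : Commute w (of b ^ n)) :
    w = 1 := by
  classical
  obtain ⟨i, rfl⟩ := Subgroup.mem_zpowers_iff.mp (mem_zpowers_of_commute_of_pow hm ha)
  obtain ⟨j, hj⟩ := Subgroup.mem_zpowers_iff.mp (mem_zpowers_of_commute_of_pow hn hb)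
  let φ : FreeGroup α →* Multiplicative ℤ :=
    lift fun x ↦ Multiplicative.ofAdd (if x = a then 1 else 0)
  have hi : Multiplicative.ofAdd i = 1 := by
    simpa [φ, hab.symm, ← ofAdd_zsmul] using congrArg φ hj.symm
  simp_all

end FreeGroup

theorem IsCyclic.nonempty_mulEquiv_int (G : Type*) [Group G] [IsCyclic G] [IsMulTorsionFree G]
    [Nontrivial G] : Nonempty (G ≃* Multiplicative ℤ) := by
  obtain ⟨g, hg⟩ := IsCyclic.exists_generator (α := G)
  have hg1 : g ≠ 1 := by
    rintro rfl
    obtain ⟨x, hx⟩ := exists_ne (1 : G)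
    simp_all
  have hinj : Function.Injective (zpowersHom G g) := fun _ _ hxy ↦
    injective_zpow_iff_not_isOfFinOrder.mpr (not_isOfFinOrder_of_isMulTorsionFree hg1) hxy
  have hsurj : Function.Surjective (zpowersHom G g) := fun x ↦ by
    obtain ⟨i, hi⟩ := Subgroup.mem_zpowers_iff.mp (hg x)
    exact ⟨Multiplicative.ofAdd i, hi⟩
  exact ⟨(MulEquiv.ofBijective _ ⟨hinj, hsurj⟩).symm⟩

open Subgroup in
theorem FreeGroup.nonempty_center_mulEquiv_int_of_finiteIndex {α : Type*} {a b : α}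
    (hab : a ≠ b) (K : Subgroup (FreeGroup α × Multiplicative ℤ)) [K.FiniteIndex] :
    Nonempty (center K ≃* Multiplicative ℤ) := by
  have hK : K.index ≠ 0 := FiniteIndex.index_ne_zero
  obtain ⟨m, hm, -, ham⟩ := exists_pow_mem_of_index_ne_zero hK
    ((of a, 1) : FreeGroup α × Multiplicative ℤ)
  obtain ⟨n, hn, -, hbn⟩ := exists_pow_mem_of_index_ne_zero hK
    ((of b, 1) : FreeGroup α × Multiplicative ℤ)
  obtain ⟨d, hd, -, htd⟩ := exists_pow_mem_of_index_ne_zero hK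
    ((1, Multiplicative.ofAdd 1) : FreeGroup α × Multiplicative ℤ)
  let f : center K →* Multiplicative ℤ :=
    (MonoidHom.snd _ _).comp (K.subtype.comp (center K).subtype)
  have hf : Function.Injective f := by
    refine (injective_iff_map_eq_one f).mpr fun z hz ↦ ?_
    have hcomm : ∀ g ∈ K, Commute ((z : K) : FreeGroup α × Multiplicative ℤ).1 g.1 :=
      fun g hg ↦ Commute.map (congrArg Subtype.val (mem_center_iff.mp z.2 ⟨g, hg⟩)).symm
        (MonoidHom.fst _ _)
    have hfst := eq_one_of_commute_pow_of_commute_pow hab hm hn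
      (by simpa using hcomm _ ham) (by simpa using hcomm _ hbn)
    exact Subtype.ext (Subtype.ext (Prod.ext hfst hz))
  have hrange : f.range ≠ ⊥ := by
    let t : center K := ⟨⟨_, htd⟩,
      mem_center_iff.mpr fun g ↦ Subtype.ext (Prod.ext (by simp) (mul_comm _ _))⟩
    refine ne_bot_iff_exists_ne_one.mpr ⟨⟨f t, t, rfl⟩, fun h ↦ ?_⟩
    have : Multiplicative.ofAdd (d : ℤ) = 1 := by
      simpa [f, t, ← ofAdd_nsmul] using congrArg Subtype.val h
    simp only [ofAdd_eq_one, Nat.cast_eq_zero] at this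
    omega
  have := (nontrivial_iff_ne_bot _).mpr hrange
  exact ⟨(MonoidHom.ofInjective hf).trans (IsCyclic.nonempty_mulEquiv_int f.range).some⟩

theorem stmt_13 (Γ : Type*) [Group Γ] (k : ℕ) (hk : 2 ≤ k)
    (H : Subgroup Γ) (hH : H.FiniteIndex)
    (hiso : Nonempty (H ≃* (FreeGroup (Fin k) × Multiplicative ℤ))) :
    ∃ N : Subgroup Γ, N.Normal ∧ Nonempty (N ≃* Multiplicative ℤ) := by
  obtain ⟨e⟩ := hiso
  let N := H.normalCore
  let K := (N.subgroupOf H).map (e : H →* FreeGroup (Fin k) × Multiplicative ℤ)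
  have : K.FiniteIndex :=
    ⟨by rw [Subgroup.index_map_equiv]; exact Subgroup.FiniteIndex.index_ne_zero⟩
  obtain ⟨eK⟩ := FreeGroup.nonempty_center_mulEquiv_int_of_finiteIndex
    (a := ⟨0, by omega⟩) (b := ⟨1, by omega⟩) (Fin.ne_of_val_ne zero_ne_one) K
  let eN : Subgroup.center N ≃* Subgroup.center K := Subgroup.centerCongr
    ((Subgroup.subgroupOfEquivOfLe H.normalCore_le).symm.trans
      (Subgroup.equivMapOfInjective _ _ e.injective))
  exact ⟨(Subgroup.center N).map N.subtype, inferInstance,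
    ⟨(Subgroup.equivMapOfInjective _ _ N.subtype_injective).symm.trans (eN.trans eK)⟩⟩
end

section
/- Let B be a 3×3 real symmetric matrix with B_{ii} = 1 for all i and −1 ≤ B_{ij} ≤ 0 for all i ≠ j. Then there exists a 2-dimensional linear subspace of ℝ³ on which the bilinear form (x, y) ↦ xᵀBy is positive definite (i.e. p(B) ≥ 2). If moreover det(B) > 0, then B is positive definite (i.e. p(B) = 3). -/
open Matrix

/-- Auxiliary: finrank of the kernel of a coordinate projection on ℝ³ is 2. -/
lemma stmt15_ker_proj (i : Fin 3) :
    Module.finrank ℝ (LinearMap.ker (LinearMap.proj i : (Fin 3 → ℝ) →ₗ[ℝ] ℝ)) = 2 := by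
  have h := LinearMap.finrank_range_add_finrank_ker (LinearMap.proj i : (Fin 3 → ℝ) →ₗ[ℝ] ℝ)
  have hr : LinearMap.range (LinearMap.proj i : (Fin 3 → ℝ) →ₗ[ℝ] ℝ) = ⊤ := by
    rw [LinearMap.range_eq_top]
    intro y
    exact ⟨Pi.single i y, by simp⟩
  rw [hr] at h
  simp [Module.finrank_pi] at h
  omega

set_option maxHeartbeats 2000000 in
theorem stmt_15 (B : Matrix (Fin 3) (Fin 3) ℝ) (hsymm : B.IsSymm)
    (hdiag : ∀ i, B i i = 1)
    (hoff : ∀ i j, i ≠ j → -1 ≤ B i j ∧ B i j ≤ 0) :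
    (∃ W : Submodule ℝ (Fin 3 → ℝ), Module.finrank ℝ W = 2 ∧
      ∀ x ∈ W, x ≠ 0 → 0 < x ⬝ᵥ (B *ᵥ x)) ∧
    (0 < B.det → ∀ x : Fin 3 → ℝ, x ≠ 0 → 0 < x ⬝ᵥ (B *ᵥ x)) := by
  have h10 : B 1 0 = B 0 1 := (hsymm.apply 1 0).symm
  have h20 : B 2 0 = B 0 2 := (hsymm.apply 2 0).symm
  have h21 : B 2 1 = B 1 2 := (hsymm.apply 2 1).symm
  obtain ⟨ha1, ha0⟩ := hoff 0 1 (by decide)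
  obtain ⟨hb1, hb0⟩ := hoff 0 2 (by decide)
  obtain ⟨hc1, hc0⟩ := hoff 1 2 (by decide)
  have key : ∀ x : Fin 3 → ℝ, x ⬝ᵥ (B *ᵥ x) =
      x 0^2 + x 1^2 + x 2^2 + 2*(B 0 1)*(x 0*x 1) + 2*(B 0 2)*(x 0*x 2) + 2*(B 1 2)*(x 1*x 2) := by
    intro x
    simp [dotProduct, mulVec, Fin.sum_univ_three, hdiag 0, hdiag 1, hdiag 2, h10, h20, h21]
    ring
  have hcoord : ∀ x : Fin 3 → ℝ, x ≠ 0 → x 0 ≠ 0 ∨ x 1 ≠ 0 ∨ x 2 ≠ 0 := by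
    intro x hx
    by_contra h
    push_neg at h
    apply hx
    funext i
    fin_cases i <;> simp [h.1, h.2.1, h.2.2]
  constructor
  · -- Part 1: a 2-dimensional positive subspace
    by_cases hA : B 0 1 = -1
    · by_cases hB : B 0 2 = -1
      · by_cases hC : B 1 2 = -1
        · -- all off-diagonal entries are -1 : use {x | x₀+x₁+x₂ = 0}
          set f : (Fin 3 → ℝ) →ₗ[ℝ] ℝ :=
            (LinearMap.proj 0 : (Fin 3 → ℝ) →ₗ[ℝ] ℝ) + (LinearMap.proj 1 : (Fin 3 → ℝ) →ₗ[ℝ] ℝ)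
              + (LinearMap.proj 2 : (Fin 3 → ℝ) →ₗ[ℝ] ℝ) with hf
          refine ⟨LinearMap.ker f, ?_, ?_⟩
          · have h := LinearMap.finrank_range_add_finrank_ker f
            have hr : LinearMap.range f = ⊤ := by
              rw [LinearMap.range_eq_top]
              intro y
              exact ⟨Pi.single 0 y, by simp [hf]⟩
            rw [hr] at h
            simp [Module.finrank_pi] at h
            omega
          · intro x hxW hx
            have hsum : x 0 + x 1 + x 2 = 0 := by simpa [hf] using hxW
            have hsq : (x 0 + x 1 + x 2)^2 = 0 := by rw [hsum]; ring
            rw [key, hA, hB, hC]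
            have hS : 0 < x 0^2 + x 1^2 + x 2^2 := by
              rcases hcoord x hx with h | h | h
              · have : (0:ℝ) < x 0^2 := by positivity
                nlinarith [sq_nonneg (x 1), sq_nonneg (x 2)]
              · have : (0:ℝ) < x 1^2 := by positivity
                nlinarith [sq_nonneg (x 0), sq_nonneg (x 2)]
              · have : (0:ℝ) < x 2^2 := by positivity
                nlinarith [sq_nonneg (x 0), sq_nonneg (x 1)]
            nlinarith [hsq, hS]
        · -- B 1 2 > -1 : use {x | x₀ = 0}
          have hC' : -1 < B 1 2 := lt_of_le_of_ne hc1 (Ne.symm hC)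
          refine ⟨LinearMap.ker (LinearMap.proj 0 : (Fin 3 → ℝ) →ₗ[ℝ] ℝ), stmt15_ker_proj 0, ?_⟩
          intro x hxW hx
          have h0 : x 0 = 0 := by simpa using hxW
          rw [key, h0]
          have hne : x 1 ≠ 0 ∨ x 2 ≠ 0 := by
            rcases hcoord x hx with h | h | h
            · exact absurd h0 h
            · exact Or.inl h
            · exact Or.inr h
          have hS : 0 < x 1^2 + x 2^2 := by
            rcases hne with h | h <;> nlinarith [pow_pos (abs_pos.mpr h) 2, sq_abs (x 1),
              sq_abs (x 2), sq_nonneg (x 1), sq_nonneg (x 2)]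
          nlinarith [mul_nonneg (neg_nonneg.mpr hc0) (sq_nonneg (x 1 - x 2)),
            mul_pos (by linarith : (0:ℝ) < 1 + B 1 2) hS]
      · -- B 0 2 > -1 : use {x | x₁ = 0}
        have hB' : -1 < B 0 2 := lt_of_le_of_ne hb1 (Ne.symm hB)
        refine ⟨LinearMap.ker (LinearMap.proj 1 : (Fin 3 → ℝ) →ₗ[ℝ] ℝ), stmt15_ker_proj 1, ?_⟩
        intro x hxW hx
        have h1 : x 1 = 0 := by simpa using hxW
        rw [key, h1]
        have hne : x 0 ≠ 0 ∨ x 2 ≠ 0 := by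
          rcases hcoord x hx with h | h | h
          · exact Or.inl h
          · exact absurd h1 h
          · exact Or.inr h
        have hS : 0 < x 0^2 + x 2^2 := by
          rcases hne with h | h
          · have : (0:ℝ) < x 0^2 := by positivity
            nlinarith [sq_nonneg (x 2)]
          · have : (0:ℝ) < x 2^2 := by positivity
            nlinarith [sq_nonneg (x 0)]
        nlinarith [mul_nonneg (neg_nonneg.mpr hb0) (sq_nonneg (x 0 - x 2)),
          mul_pos (by linarith : (0:ℝ) < 1 + B 0 2) hS]
    · -- B 0 1 > -1 : use {x | x₂ = 0}
      have hA' : -1 < B 0 1 := lt_of_le_of_ne ha1 (Ne.symm hA)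
      refine ⟨LinearMap.ker (LinearMap.proj 2 : (Fin 3 → ℝ) →ₗ[ℝ] ℝ), stmt15_ker_proj 2, ?_⟩
      intro x hxW hx
      have h2 : x 2 = 0 := by simpa using hxW
      rw [key, h2]
      have hne : x 0 ≠ 0 ∨ x 1 ≠ 0 := by
        rcases hcoord x hx with h | h | h
        · exact Or.inl h
        · exact Or.inr h
        · exact absurd h2 h
      have hS : 0 < x 0^2 + x 1^2 := by
        rcases hne with h | h
        · have : (0:ℝ) < x 0^2 := by positivity
          nlinarith [sq_nonneg (x 1)]
        · have : (0:ℝ) < x 1^2 := by positivity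
          nlinarith [sq_nonneg (x 0)]
      nlinarith [mul_nonneg (neg_nonneg.mpr ha0) (sq_nonneg (x 0 - x 1)),
        mul_pos (by linarith : (0:ℝ) < 1 + B 0 1) hS]
  · -- Part 2: det > 0 implies positive definite
    intro hdet x hx
    have hdet3 : B.det = 1 + 2*(B 0 1)*(B 0 2)*(B 1 2) - (B 0 1)^2 - (B 0 2)^2 - (B 1 2)^2 := by
      rw [Matrix.det_fin_three]
      simp [hdiag 0, hdiag 1, hdiag 2, h10, h20, h21]
      ring
    rw [hdet3] at hdet
    have h1a : 0 < 1 - (B 0 1)^2 := by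
      nlinarith [mul_nonneg (mul_nonneg (neg_nonneg.mpr ha0) (neg_nonneg.mpr hb0))
        (neg_nonneg.mpr hc0), sq_nonneg (B 0 2), sq_nonneg (B 1 2)]
    rw [key]
    by_cases h2 : x 2 = 0
    · rw [h2]
      by_cases h1 : x 1 = 0
      · rw [h1]
        have h0 : x 0 ≠ 0 := by
          rcases hcoord x hx with h | h | h
          · exact h
          · exact absurd h1 h
          · exact absurd h2 h
        have : (0:ℝ) < x 0^2 := by positivity
        nlinarith []
      · have hx1 : (0:ℝ) < x 1^2 := by positivity
        nlinarith [sq_nonneg (x 0 + B 0 1 * x 1), mul_pos h1a hx1]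
    · have hx2 : (0:ℝ) < x 2^2 := by positivity
      have hQ : (1 - (B 0 1)^2) *
          (x 0^2 + x 1^2 + x 2^2 + 2*(B 0 1)*(x 0*x 1) + 2*(B 0 2)*(x 0*x 2)
            + 2*(B 1 2)*(x 1*x 2)) =
          (1 - (B 0 1)^2)*(x 0 + B 0 1*x 1 + B 0 2*x 2)^2
          + ((1 - (B 0 1)^2)*x 1 + (B 1 2 - B 0 1*B 0 2)*x 2)^2
          + (1 + 2*(B 0 1)*(B 0 2)*(B 1 2) - (B 0 1)^2 - (B 0 2)^2 - (B 1 2)^2)*x 2^2 := by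
        ring
      have hpos : 0 < (1 - (B 0 1)^2) *
          (x 0^2 + x 1^2 + x 2^2 + 2*(B 0 1)*(x 0*x 1) + 2*(B 0 2)*(x 0*x 2)
            + 2*(B 1 2)*(x 1*x 2)) := by
        rw [hQ]
        have t1 : 0 ≤ (1 - (B 0 1)^2)*(x 0 + B 0 1*x 1 + B 0 2*x 2)^2 :=
          mul_nonneg h1a.le (sq_nonneg _)
        have t2 : 0 ≤ ((1 - (B 0 1)^2)*x 1 + (B 1 2 - B 0 1*B 0 2)*x 2)^2 := sq_nonneg _
        have t3 : 0 < (1 + 2*(B 0 1)*(B 0 2)*(B 1 2) - (B 0 1)^2 - (B 0 2)^2 - (B 1 2)^2)*x 2^2 :=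
          mul_pos hdet hx2
        linarith
      by_contra hE
      push_neg at hE
      nlinarith [mul_nonneg h1a.le (neg_nonneg.mpr hE)]
end

section
/- Let B be a 4×4 real symmetric matrix with B_{ii} = 1 for all i and −1 ≤ B_{ij} ≤ 0 for all i ≠ j, and assume B is irreducible, i.e. the index set {1,2,3,4} admits no partition into two nonempty sets I and J with B_{ij} = 0 for all i ∈ I and j ∈ J. Then there exists a 3-dimensional linear subspace of ℝ⁴ on which the bilinear form (x, y) ↦ xᵀBy is positive definite (i.e. p(B) ≥ 3). -/
open Matrix

/-- A real matrix indexed by `ι` is irreducible if the index set admits no partition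
into two nonempty sets `I`, `J` with `B i j = 0` for all `i ∈ I`, `j ∈ J`. -/
def Matrix.IsIrreducibleMatrix {ι : Type*} (B : Matrix ι ι ℝ) : Prop :=
  ¬ ∃ I J : Set ι, I.Nonempty ∧ J.Nonempty ∧ (∀ i, i ∈ I ∨ i ∈ J) ∧
      (∀ i, ¬ (i ∈ I ∧ i ∈ J)) ∧ ∀ i ∈ I, ∀ j ∈ J, B i j = 0

set_option maxHeartbeats 1000000

private noncomputable def sumFunctional : (Fin 4 → ℝ) →ₗ[ℝ] ℝ := ∑ i, LinearMap.proj i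

private lemma dnonneg (b u v : ℝ) (hb1 : -1 ≤ b) (hb0 : b ≤ 0)
    (h1 : u ≤ v) (h2 : -u ≤ v) : 0 ≤ 2*b*u + u + v := by nlinarith

private lemma pairzero (b xi xj : ℝ) (hd : 2*b*(xi*xj) + xi*xj + |xi| * |xj| = 0)
    (hne : xi * xj < 0) : b = 0 := by
  have habs : |xi| * |xj| = -(xi*xj) := by rw [← abs_mul, abs_of_neg hne]
  rw [habs] at hd
  have h2 : b * (xi * xj) = 0 := by linarith
  rcases mul_eq_zero.mp h2 with h | h
  · exact h
  · exact absurd h (ne_of_lt hne)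

private lemma keypos (B : Matrix (Fin 4) (Fin 4) ℝ) (hsymm : B.IsSymm)
    (hdiag : ∀ i, B i i = 1)
    (hoff : ∀ i j, i ≠ j → -1 ≤ B i j ∧ B i j ≤ 0)
    (hirr : B.IsIrreducibleMatrix)
    (x : Fin 4 → ℝ) (hsum : x 0 + x 1 + x 2 + x 3 = 0) (hx0 : x ≠ 0) :
    0 < x ⬝ᵥ (B *ᵥ x) := by
  by_contra hQ
  push_neg at hQ
  simp only [dotProduct, mulVec, Fin.sum_univ_four, hdiag] at hQ
  rw [hsymm.apply 0 1, hsymm.apply 0 2, hsymm.apply 0 3, hsymm.apply 1 2,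
     hsymm.apply 1 3, hsymm.apply 2 3] at hQ
  set y : Fin 4 → ℝ := fun i => |x i| with hy
  have hysq : ∀ i, y i ^ 2 = x i ^ 2 := fun i => sq_abs (x i)
  have hyle : ∀ i j, x i * x j ≤ y i * y j := by
    intro i j
    calc x i * x j ≤ |x i * x j| := le_abs_self _
    _ = |x i| * |x j| := abs_mul _ _
  have hyle' : ∀ i j, -(x i * x j) ≤ y i * y j := by
    intro i j
    calc -(x i * x j) ≤ |x i * x j| := neg_le_abs _
    _ = |x i| * |x j| := abs_mul _ _
  have d01 := dnonneg (B 0 1) (x 0 * x 1) (y 0 * y 1) (hoff 0 1 (by decide)).1 (hoff 0 1 (by decide)).2 (hyle 0 1) (hyle' 0 1)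
  have d02 := dnonneg (B 0 2) (x 0 * x 2) (y 0 * y 2) (hoff 0 2 (by decide)).1 (hoff 0 2 (by decide)).2 (hyle 0 2) (hyle' 0 2)
  have d03 := dnonneg (B 0 3) (x 0 * x 3) (y 0 * y 3) (hoff 0 3 (by decide)).1 (hoff 0 3 (by decide)).2 (hyle 0 3) (hyle' 0 3)
  have d12 := dnonneg (B 1 2) (x 1 * x 2) (y 1 * y 2) (hoff 1 2 (by decide)).1 (hoff 1 2 (by decide)).2 (hyle 1 2) (hyle' 1 2)
  have d13 := dnonneg (B 1 3) (x 1 * x 3) (y 1 * y 3) (hoff 1 3 (by decide)).1 (hoff 1 3 (by decide)).2 (hyle 1 3) (hyle' 1 3)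
  have d23 := dnonneg (B 2 3) (x 2 * x 3) (y 2 * y 3) (hoff 2 3 (by decide)).1 (hoff 2 3 (by decide)).2 (hyle 2 3) (hyle' 2 3)
  have hident : x 0 * (1 * x 0 + B 0 1 * x 1 + B 0 2 * x 2 + B 0 3 * x 3) +
          x 1 * (B 0 1 * x 0 + 1 * x 1 + B 1 2 * x 2 + B 1 3 * x 3) +
        x 2 * (B 0 2 * x 0 + B 1 2 * x 1 + 1 * x 2 + B 2 3 * x 3) +
      x 3 * (B 0 3 * x 0 + B 1 3 * x 1 + B 2 3 * x 2 + 1 * x 3)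
      = (2*(B 0 1)*(x 0 * x 1) + x 0 * x 1 + y 0 * y 1)
      + (2*(B 0 2)*(x 0 * x 2) + x 0 * x 2 + y 0 * y 2)
      + (2*(B 0 3)*(x 0 * x 3) + x 0 * x 3 + y 0 * y 3)
      + (2*(B 1 2)*(x 1 * x 2) + x 1 * x 2 + y 1 * y 2)
      + (2*(B 1 3)*(x 1 * x 3) + x 1 * x 3 + y 1 * y 3)
      + (2*(B 2 3)*(x 2 * x 3) + x 2 * x 3 + y 2 * y 3)
      + ((y 0 - y 1)^2 + (y 0 - y 2)^2 + (y 0 - y 3)^2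
        + (y 1 - y 2)^2 + (y 1 - y 3)^2 + (y 2 - y 3)^2)/2 := by
    linear_combination (-(1:ℝ)/2) * (x 0 + x 1 + x 2 + x 3) * hsum
      - (3/2) * hysq 0 - (3/2) * hysq 1 - (3/2) * hysq 2 - (3/2) * hysq 3
  rw [hident] at hQ
  have s01 := sq_nonneg (y 0 - y 1); have s02 := sq_nonneg (y 0 - y 2)
  have s03 := sq_nonneg (y 0 - y 3); have s12 := sq_nonneg (y 1 - y 2)
  have s13 := sq_nonneg (y 1 - y 3); have s23 := sq_nonneg (y 2 - y 3)
  have e01 : 2*(B 0 1)*(x 0 * x 1) + x 0 * x 1 + y 0 * y 1 = 0 := by linarith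
  have e02 : 2*(B 0 2)*(x 0 * x 2) + x 0 * x 2 + y 0 * y 2 = 0 := by linarith
  have e03 : 2*(B 0 3)*(x 0 * x 3) + x 0 * x 3 + y 0 * y 3 = 0 := by linarith
  have e12 : 2*(B 1 2)*(x 1 * x 2) + x 1 * x 2 + y 1 * y 2 = 0 := by linarith
  have e13 : 2*(B 1 3)*(x 1 * x 3) + x 1 * x 3 + y 1 * y 3 = 0 := by linarith
  have e23 : 2*(B 2 3)*(x 2 * x 3) + x 2 * x 3 + y 2 * y 3 = 0 := by linarith
  have feq : ∀ i j : Fin 4, (y i - y j)^2 ≤ 0 → y i = y j := by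
    intro i j h
    have h2 : (y i - y j)^2 = 0 := le_antisymm h (sq_nonneg _)
    have h3 : y i - y j = 0 := by
      exact pow_eq_zero_iff (by norm_num) |>.mp h2
    linarith
  have f01 : y 0 = y 1 := feq 0 1 (by linarith)
  have f02 : y 0 = y 2 := feq 0 2 (by linarith)
  have f03 : y 0 = y 3 := feq 0 3 (by linarith)
  have hyd : ∀ i, y i = |x i| := fun i => rfl
  have hyall : ∀ i : Fin 4, y i = y 0 := by
    intro i
    fin_cases i
    · rfl
    · exact f01.symm
    · exact f02.symm
    · exact f03.symm
  have ht : 0 < y 0 := by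
    rcases (abs_nonneg (x 0)).lt_or_eq with h | h
    · exact h
    · exfalso; apply hx0; funext i
      have h0 : |x i| = 0 := by rw [← hyd i, hyall i, hyd 0]; exact h.symm
      exact abs_eq_zero.mp h0
  have hne : ∀ i, x i ≠ 0 := by
    intro i
    have h0 : 0 < |x i| := by rw [← hyd i, hyall i]; exact ht
    exact abs_pos.mp h0
  apply hirr
  refine ⟨{i | 0 < x i}, {i | x i < 0}, ?_, ?_, ?_, ?_, ?_⟩
  · by_contra h
    rw [Set.not_nonempty_iff_eq_empty] at h
    have hall : ∀ i, x i ≤ 0 := by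
      intro i; by_contra hc; push_neg at hc
      exact absurd (Set.eq_empty_iff_forall_notMem.mp h i) (by simpa using hc)
    have g0 : x 0 = -(y 0) := by rw [hyd 0, abs_of_nonpos (hall 0), neg_neg]
    have g1 : x 1 = -(y 1) := by rw [hyd 1, abs_of_nonpos (hall 1), neg_neg]
    have g2 : x 2 = -(y 2) := by rw [hyd 2, abs_of_nonpos (hall 2), neg_neg]
    have g3 : x 3 = -(y 3) := by rw [hyd 3, abs_of_nonpos (hall 3), neg_neg]
    rw [g0, g1, g2, g3, ← f01, ← f02, ← f03] at hsum
    linarith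
  · by_contra h
    rw [Set.not_nonempty_iff_eq_empty] at h
    have hall : ∀ i, 0 ≤ x i := by
      intro i; by_contra hc; push_neg at hc
      exact absurd (Set.eq_empty_iff_forall_notMem.mp h i) (by simpa using hc)
    have g0 : x 0 = y 0 := by rw [hyd 0, abs_of_nonneg (hall 0)]
    have g1 : x 1 = y 1 := by rw [hyd 1, abs_of_nonneg (hall 1)]
    have g2 : x 2 = y 2 := by rw [hyd 2, abs_of_nonneg (hall 2)]
    have g3 : x 3 = y 3 := by rw [hyd 3, abs_of_nonneg (hall 3)]
    rw [g0, g1, g2, g3, ← f01, ← f02, ← f03] at hsum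
    linarith
  · intro i
    rcases lt_trichotomy (x i) 0 with h | h | h
    · right; exact h
    · exact absurd h (hne i)
    · left; exact h
  · intro i hi
    simp only [Set.mem_setOf_eq] at hi
    exact absurd (lt_trans hi.1 hi.2) (lt_irrefl 0)
  · intro i hi j hj
    simp only [Set.mem_setOf_eq] at hi hj
    have e01' : 2*(B 0 1)*(x 0 * x 1) + x 0 * x 1 + |x 0| * |x 1| = 0 := by
      rw [← hyd 0, ← hyd 1]; exact e01
    have e02' : 2*(B 0 2)*(x 0 * x 2) + x 0 * x 2 + |x 0| * |x 2| = 0 := by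
      rw [← hyd 0, ← hyd 2]; exact e02
    have e03' : 2*(B 0 3)*(x 0 * x 3) + x 0 * x 3 + |x 0| * |x 3| = 0 := by
      rw [← hyd 0, ← hyd 3]; exact e03
    have e12' : 2*(B 1 2)*(x 1 * x 2) + x 1 * x 2 + |x 1| * |x 2| = 0 := by
      rw [← hyd 1, ← hyd 2]; exact e12
    have e13' : 2*(B 1 3)*(x 1 * x 3) + x 1 * x 3 + |x 1| * |x 3| = 0 := by
      rw [← hyd 1, ← hyd 3]; exact e13
    have e23' : 2*(B 2 3)*(x 2 * x 3) + x 2 * x 3 + |x 2| * |x 3| = 0 := by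
      rw [← hyd 2, ← hyd 3]; exact e23
    have zz01 := pairzero _ _ _ e01'
    have zz02 := pairzero _ _ _ e02'
    have zz03 := pairzero _ _ _ e03'
    have zz12 := pairzero _ _ _ e12'
    have zz13 := pairzero _ _ _ e13'
    have zz23 := pairzero _ _ _ e23'
    clear hQ hident e01 e02 e03 e12 e13 e23 d01 d02 d03 d12 d13 d23
    fin_cases i <;> fin_cases j
    all_goals first
      | exact absurd (lt_trans hi hj) (lt_irrefl 0)
      | exact zz01 (mul_neg_of_pos_of_neg hi hj)
      | exact zz02 (mul_neg_of_pos_of_neg hi hj)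
      | exact zz03 (mul_neg_of_pos_of_neg hi hj)
      | exact zz12 (mul_neg_of_pos_of_neg hi hj)
      | exact zz13 (mul_neg_of_pos_of_neg hi hj)
      | exact zz23 (mul_neg_of_pos_of_neg hi hj)
      | exact (hsymm.apply 0 1).trans (zz01 (mul_neg_of_neg_of_pos hj hi))
      | exact (hsymm.apply 0 2).trans (zz02 (mul_neg_of_neg_of_pos hj hi))
      | exact (hsymm.apply 0 3).trans (zz03 (mul_neg_of_neg_of_pos hj hi))
      | exact (hsymm.apply 1 2).trans (zz12 (mul_neg_of_neg_of_pos hj hi))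
      | exact (hsymm.apply 1 3).trans (zz13 (mul_neg_of_neg_of_pos hj hi))
      | exact (hsymm.apply 2 3).trans (zz23 (mul_neg_of_neg_of_pos hj hi))

theorem stmt_16 (B : Matrix (Fin 4) (Fin 4) ℝ) (hsymm : B.IsSymm)
    (hdiag : ∀ i, B i i = 1)
    (hoff : ∀ i j, i ≠ j → -1 ≤ B i j ∧ B i j ≤ 0)
    (hirr : B.IsIrreducibleMatrix) :
    ∃ W : Submodule ℝ (Fin 4 → ℝ), Module.finrank ℝ W = 3 ∧
      ∀ x ∈ W, x ≠ 0 → 0 < x ⬝ᵥ (B *ᵥ x) := by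
  refine ⟨LinearMap.ker sumFunctional, ?_, ?_⟩
  · have hsurj : Function.Surjective sumFunctional := by
      intro c
      refine ⟨![c,0,0,0], ?_⟩
      simp [sumFunctional, Fin.sum_univ_four]
    have h := LinearMap.finrank_range_add_finrank_ker sumFunctional
    rw [LinearMap.range_eq_top.mpr hsurj] at h
    simp [Module.finrank_self] at h
    omega
  · intro x hx hx0
    have hsum : x 0 + x 1 + x 2 + x 3 = 0 := by
      have := LinearMap.mem_ker.mp hx
      simpa [sumFunctional, Fin.sum_univ_four] using this
    exact keypos B hsymm hdiag hoff hirr x hsum hx0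
end

section
/- Let n ≥ 4 and let B be an n×n real symmetric matrix with B_{ii} = 1 for all i and −1 ≤ B_{ij} ≤ 0 for all i ≠ j. If B is irreducible, i.e. the index set {1,…,n} admits no partition into two nonempty sets I and J with B_{ij} = 0 for all i ∈ I and j ∈ J, then there exists a 3-dimensional linear subspace of ℝⁿ on which the bilinear form (x, y) ↦ xᵀBy is positive definite (i.e. p(B) ≥ 3). -/
/-
Let `λ` be the eigenvalues of `B` and `μ = 1 - λ`. From `tr B = n` and `tr B² = ∑ B_ij²` we get
`∑ μ = 0` and `∑ μ² = ∑ B_ij² - n`. Off the diagonal `B_ij² ≤ -B_ij`, and the Rayleigh quotient of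
the all-ones vector gives `n λ_min ≤ ∑ B_ij`; together `∑ μ² ≤ n t` with `t = max μ = 1 - λ_min`.
If at most two eigenvalues were positive, at least `n - 2` of the `μ` would be `≥ 1` and the other
two would sum to minus their total, which forces `∑ μ² ≥ n t`, with equality only for `n = 4` and
`t = 1`. In that case every inequality is tight: the off-diagonal entries are `0` or `-1` and
`∑ B_ij = 0`, so the graph of nonzero entries has two edges on four vertices. It is disconnected,
contradicting irreducibility. Hence three eigenvalues are positive, and their eigenvectors span
the required subspace.
-/

open Matrix

open Finset

theorem Matrix.mulVec_dotProduct_mulVec_mulVec {ι R : Type*} [Fintype ι] [CommSemiring R]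
    (U M : Matrix ι ι R) (y z : ι → R) :
    (U *ᵥ y) ⬝ᵥ (M *ᵥ (U *ᵥ z)) = y ⬝ᵥ ((Uᵀ * M * U) *ᵥ z) := by
  rw [← vecMul_transpose, ← dotProduct_mulVec, mulVec_mulVec, mulVec_mulVec, Matrix.mul_assoc]

namespace Matrix.IsHermitian

variable {ι : Type*} [Fintype ι] [DecidableEq ι] {B : Matrix ι ι ℝ} (hB : B.IsHermitian)

local notation "U" => (hB.eigenvectorUnitary : Matrix ι ι ℝ)

theorem transpose_eigenvectorUnitary_mul_mul : Uᵀ * B * U = diagonal hB.eigenvalues := by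
  simpa [star_eq_conjTranspose] using hB.conjStarAlgAut_star_eigenvectorUnitary

theorem transpose_eigenvectorUnitary_mul_self : Uᵀ * U = 1 := by
  simpa [star_eq_conjTranspose] using Unitary.coe_star_mul_self hB.eigenvectorUnitary

theorem eigenvectorUnitary_mul_transpose : U * Uᵀ = 1 := by
  simpa [star_eq_conjTranspose] using Unitary.coe_mul_star_self hB.eigenvectorUnitary

theorem eigenvectorUnitary_mulVec_transpose_mulVec (x : ι → ℝ) : U *ᵥ (Uᵀ *ᵥ x) = x := by
  rw [mulVec_mulVec, hB.eigenvectorUnitary_mul_transpose, one_mulVec]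

theorem dotProduct_mulVec_eigenvectorUnitary (y : ι → ℝ) :
    (U *ᵥ y) ⬝ᵥ (B *ᵥ (U *ᵥ y)) = ∑ i, hB.eigenvalues i * y i ^ 2 := by
  rw [mulVec_dotProduct_mulVec_mulVec, hB.transpose_eigenvectorUnitary_mul_mul]
  simp only [dotProduct, mulVec_diagonal]
  exact sum_congr rfl fun i _ => by ring

theorem dotProduct_eigenvectorUnitary (y : ι → ℝ) :
    (U *ᵥ y) ⬝ᵥ (U *ᵥ y) = ∑ i, y i ^ 2 := by
  simpa [hB.transpose_eigenvectorUnitary_mul_self, dotProduct, sq]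
    using mulVec_dotProduct_mulVec_mulVec U 1 y y

theorem mul_dotProduct_le_dotProduct_mulVec {m : ℝ} (hm : ∀ i, m ≤ hB.eigenvalues i)
    (x : ι → ℝ) : m * (x ⬝ᵥ x) ≤ x ⬝ᵥ (B *ᵥ x) := by
  rw [← hB.eigenvectorUnitary_mulVec_transpose_mulVec x, hB.dotProduct_eigenvectorUnitary,
    hB.dotProduct_mulVec_eigenvectorUnitary, mul_sum]
  exact sum_le_sum fun i _ => mul_le_mul_of_nonneg_right (hm i) (sq_nonneg _)

theorem sum_eigenvalues_sq : ∑ i, hB.eigenvalues i ^ 2 = ∑ i, ∑ j, B i j ^ 2 := by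
  have hconj : diagonal hB.eigenvalues * diagonal hB.eigenvalues = Uᵀ * (B * B) * U := by
    rw [← hB.transpose_eigenvectorUnitary_mul_mul]
    simp only [Matrix.mul_assoc, ← Matrix.mul_assoc U Uᵀ, hB.eigenvectorUnitary_mul_transpose,
      Matrix.one_mul]
  have htrace := congrArg trace hconj
  rw [diagonal_mul_diagonal, trace_diagonal, trace_mul_cycle, ← Matrix.mul_assoc,
    hB.eigenvectorUnitary_mul_transpose, Matrix.one_mul] at htrace
  simp only [htrace, trace, diag, mul_apply, sq]
  exact sum_congr rfl fun i _ => sum_congr rfl fun j _ => by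
    rw [(isHermitian_iff_isSymm.1 hB).apply i j]

theorem sum_eigenvalues_eq_card (hdiag : ∀ i, B i i = 1) :
    ∑ i, hB.eigenvalues i = Fintype.card ι := by
  simpa [trace, hdiag] using hB.trace_eq_sum_eigenvalues.symm

theorem sum_one_sub_eigenvalues (hdiag : ∀ i, B i i = 1) : ∑ i, (1 - hB.eigenvalues i) = 0 := by
  simp [sum_sub_distrib, hB.sum_eigenvalues_eq_card hdiag]

theorem sum_one_sub_eigenvalues_sq (hdiag : ∀ i, B i i = 1) :
    ∑ i, (1 - hB.eigenvalues i) ^ 2 = ∑ i, ∑ j, B i j ^ 2 - Fintype.card ι := by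
  simp only [sub_sq, sum_add_distrib, sum_sub_distrib, ← mul_sum, hB.sum_eigenvalues_sq,
    hB.sum_eigenvalues_eq_card hdiag]
  simp only [one_pow, sum_const, card_univ, nsmul_eq_mul, mul_one]
  ring

theorem exists_finrank_eq_forall_pos {m : ℕ} (hm : m ≤ #{i | 0 < hB.eigenvalues i}) :
    ∃ W : Submodule ℝ (ι → ℝ), Module.finrank ℝ W = m ∧
      ∀ x ∈ W, x ≠ 0 → 0 < x ⬝ᵥ (B *ᵥ x) := by
  obtain ⟨S, hS, rfl⟩ := exists_subset_card_eq hm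
  let e := UnitaryGroup.toLinearEquiv hB.eigenvectorUnitary
  let b := (Pi.basisFun ℝ ι).map e
  refine ⟨Submodule.span ℝ (b '' S), ?_, fun x hx hx0 => ?_⟩
  · rw [Set.image_eq_range]
    exact (finrank_span_eq_card (b.linearIndependent.comp _ Subtype.val_injective)).trans (by simp)
  obtain ⟨y, rfl⟩ : ∃ y, U *ᵥ y = x := ⟨_, hB.eigenvectorUnitary_mulVec_transpose_mulVec x⟩
  have hpos : ∀ i, y i ≠ 0 → 0 < hB.eigenvalues i := fun i hi => by
    have he : e.symm (U *ᵥ y) = y := e.symm_apply_apply y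
    simpa using hS (b.mem_span_image.1 hx (by simpa [b, he] using hi))
  obtain ⟨j, hj⟩ : ∃ j, y j ≠ 0 := by
    by_contra! hy
    exact hx0 (by rw [show y = 0 from funext hy, mulVec_zero])
  rw [hB.dotProduct_mulVec_eigenvectorUnitary]
  refine sum_pos' (fun i _ => ?_) ⟨j, mem_univ j, mul_pos (hpos j hj) (sq_pos_of_ne_zero hj)⟩
  by_cases hi : y i = 0
  · simp [hi]
  · exact (mul_pos (hpos i hi) (sq_pos_of_ne_zero hi)).le

end Matrix.IsHermitian

theorem Finset.add_card_erase_le_sum {ι : Type*} [DecidableEq ι] {s : Finset ι} {f : ι → ℝ}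
    {i : ι} (hi : i ∈ s) (hf : ∀ j ∈ s, 1 ≤ f j) : f i + #(s.erase i) ≤ ∑ j ∈ s, f j := by
  rw [← add_sum_erase s f hi, add_le_add_iff_left]
  simpa using card_nsmul_le_sum (s.erase i) f 1 fun j hj => hf j (mem_of_mem_erase hj)

section FewValuesBelowOne

variable {ι : Type*} [Fintype ι] {μ : ι → ℝ} {i₀ : ι}

theorem sq_add_le_sum_sq_of_few_lt_one (hmax : ∀ i, μ i ≤ μ i₀) (hsum : ∑ i, μ i = 0)
    (hfew : #{i | μ i < 1} ≤ 2) (hcard : 3 ≤ Fintype.card ι) :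
    (μ i₀ + (Fintype.card ι - 3)) ^ 2 / 2 + μ i₀ ^ 2 + (Fintype.card ι - 3) ≤ ∑ i, μ i ^ 2 := by
  classical
  have hone : 1 ≤ μ i₀ := by
    by_contra! h
    have : #{i | μ i < 1} = Fintype.card ι := by
      rw [filter_true_of_mem fun i _ => (hmax i).trans_lt h, card_univ]
    omega
  obtain ⟨T, hsmallT, hTi₀, hT⟩ := exists_subsuperset_card_eq
    (s := {i | μ i < 1}) (t := univ.erase i₀) (n := 2)
    (fun i hi => mem_erase.2 ⟨fun h => by linarith [(mem_filter.1 hi).2, h ▸ hone], mem_univ i⟩)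
    hfew (by rw [card_erase_of_mem (mem_univ _), card_univ]; omega)
  have hi₀ : i₀ ∈ Tᶜ := mem_compl.2 fun h => (mem_erase.1 (hTi₀ h)).1 rfl
  have hTc : ∀ i ∈ Tᶜ, 1 ≤ μ i := fun i hi => by
    by_contra! h
    exact mem_compl.1 hi (hsmallT (by simpa using h))
  have hcardTc : (#(Tᶜ.erase i₀) : ℝ) = Fintype.card ι - 3 := by
    rw [card_erase_of_mem hi₀, card_compl, hT, Nat.cast_sub (by omega), Nat.cast_sub (by omega)]
    push_cast; ring
  have hlin := add_card_erase_le_sum hi₀ hTc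
  have hsq := add_card_erase_le_sum (f := fun i => μ i ^ 2) hi₀
    fun i hi => one_le_pow₀ (hTc i hi)
  rw [hcardTc] at hlin hsq
  have hsumT : μ i₀ + (Fintype.card ι - 3) ≤ -∑ i ∈ T, μ i := by
    linarith [sum_add_sum_compl T μ]
  have hsqT : (μ i₀ + (Fintype.card ι - 3)) ^ 2 ≤ 2 * ∑ i ∈ T, μ i ^ 2 := calc
    _ ≤ (∑ i ∈ T, μ i) ^ 2 := by
      rw [← neg_sq (∑ i ∈ T, μ i)]
      exact pow_le_pow_left₀ (by linarith) hsumT 2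
    _ ≤ 2 * ∑ i ∈ T, μ i ^ 2 := by simpa [hT] using sq_sum_le_card_mul_sum_sq (s := T) (f := μ)
  linarith [sum_add_sum_compl T fun i => μ i ^ 2]

theorem card_eq_four_of_sum_sq_le (hmax : ∀ i, μ i ≤ μ i₀) (hsum : ∑ i, μ i = 0)
    (hfew : #{i | μ i < 1} ≤ 2) (hcard : 4 ≤ Fintype.card ι)
    (hle : ∑ i, μ i ^ 2 ≤ Fintype.card ι * μ i₀) :
    Fintype.card ι = 4 ∧ μ i₀ = 1 ∧ ∑ i, μ i ^ 2 = 4 := by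
  have hlow := sq_add_le_sum_sq_of_few_lt_one hmax hsum hfew (by omega)
  set k : ℝ := Fintype.card ι - 3 with hk
  have hk1 : 1 ≤ k := by
    rw [hk, le_sub_iff_add_le]; exact_mod_cast hcard
  have key : 3 * (μ i₀ - 1) ^ 2 + (k - 1) * (k + 3) ≤ 0 := by
    rw [show (Fintype.card ι : ℝ) = k + 3 by ring] at hle
    nlinarith
  have ht : μ i₀ = 1 := by nlinarith [sq_nonneg (μ i₀ - 1)]
  have hk1' : k = 1 := by nlinarith [sq_nonneg (μ i₀ - 1)]
  refine ⟨by exact_mod_cast (show (Fintype.card ι : ℝ) = 4 by linarith), ht, ?_⟩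
  rw [ht, hk1'] at hlow
  rw [ht, show (Fintype.card ι : ℝ) = 4 by linarith] at hle
  linarith

end FewValuesBelowOne

theorem Matrix.sq_add_le_ite_of_unit_diagonal {ι : Type*} [DecidableEq ι] {B : Matrix ι ι ℝ}
    (hdiag : ∀ i, B i i = 1) (hoff : ∀ i j, i ≠ j → -1 ≤ B i j ∧ B i j ≤ 0) (i j : ι) :
    B i j ^ 2 + B i j ≤ if i = j then 2 else 0 := by
  split_ifs with hij
  · subst hij; norm_num [hdiag]
  · obtain ⟨h1, h2⟩ := hoff i j hij
    nlinarith

section UnitDiagonal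

variable {ι : Type*} [Fintype ι] [DecidableEq ι] {B : Matrix ι ι ℝ}

theorem Matrix.sum_sq_add_sum_le_of_unit_diagonal (hdiag : ∀ i, B i i = 1)
    (hoff : ∀ i j, i ≠ j → -1 ≤ B i j ∧ B i j ≤ 0) :
    ∑ i, ∑ j, B i j ^ 2 + ∑ i, ∑ j, B i j ≤ 2 * Fintype.card ι := by
  calc ∑ i, ∑ j, B i j ^ 2 + ∑ i, ∑ j, B i j = ∑ i, ∑ j, (B i j ^ 2 + B i j) := by
        simp only [sum_add_distrib]
    _ ≤ ∑ i, ∑ j : ι, if i = j then (2 : ℝ) else 0 :=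
        sum_le_sum fun i _ => sum_le_sum fun j _ => sq_add_le_ite_of_unit_diagonal hdiag hoff i j
    _ = 2 * Fintype.card ι := by simp [mul_comm]

theorem Matrix.eq_zero_or_eq_neg_one_of_sum_sq_add_sum_eq (hdiag : ∀ i, B i i = 1)
    (hoff : ∀ i j, i ≠ j → -1 ≤ B i j ∧ B i j ≤ 0)
    (heq : ∑ i, ∑ j, B i j ^ 2 + ∑ i, ∑ j, B i j = 2 * Fintype.card ι) (i j : ι) (hij : i ≠ j) :
    B i j = 0 ∨ B i j = -1 := by
  have hle := sq_add_le_ite_of_unit_diagonal hdiag hoff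
  have hrows : ∑ i, ∑ j, (B i j ^ 2 + B i j) = ∑ i, ∑ j : ι, if i = j then (2 : ℝ) else 0 := by
    simp only [sum_add_distrib, heq]
    simp [mul_comm]
  rw [sum_eq_sum_iff_of_le fun i _ => sum_le_sum fun j _ => hle i j] at hrows
  have hentry := (sum_eq_sum_iff_of_le fun j _ => hle i j).1 (hrows i (mem_univ i)) j (mem_univ j)
  rw [if_neg hij] at hentry
  have : B i j * (B i j + 1) = 0 := by linarith
  rcases mul_eq_zero.1 this with h | h
  · exact .inl h
  · exact .inr (by linarith)

end UnitDiagonal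

namespace Matrix.IsIrreducibleMatrix

variable {ι : Type*} {B : Matrix ι ι ℝ}

theorem connected_fromRel [Nonempty ι] (hB : B.IsIrreducibleMatrix) :
    (SimpleGraph.fromRel fun i j => B i j ≠ 0).Connected := by
  set G := SimpleGraph.fromRel fun i j => B i j ≠ 0
  obtain ⟨v⟩ := ‹Nonempty ι›
  rw [SimpleGraph.connected_iff_exists_forall_reachable]
  by_contra! hdisc
  obtain ⟨w, hw⟩ := hdisc v
  refine hB ⟨{u | G.Reachable v u}, {u | ¬ G.Reachable v u}, ⟨v, .rfl⟩, ⟨w, hw⟩,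
    fun u => em _, fun u h => h.2 h.1, fun i hi j hj => ?_⟩
  by_contra hij
  have hne : i ≠ j := by rintro rfl; exact hj hi
  exact hj (hi.trans (SimpleGraph.Adj.reachable (by simp [G, hne, hij])))

theorem sum_le_two_sub_card [Fintype ι] (hirr : B.IsIrreducibleMatrix) (hsymm : B.IsSymm)
    (hdiag : ∀ i, B i i = 1) (h01 : ∀ i j, i ≠ j → B i j = 0 ∨ B i j = -1) :
    ∑ i, ∑ j, B i j ≤ 2 - Fintype.card ι := by
  classical
  rcases isEmpty_or_nonempty ι with hι | hι
  · simp
  set G := SimpleGraph.fromRel fun i j => B i j ≠ 0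
  have hentry : ∀ i j, B i j = (if i = j then 1 else 0) - (if G.Adj i j then 1 else 0) := by
    intro i j
    by_cases hij : i = j
    · simp [hij, hdiag]
    · rcases h01 i j hij with h | h <;> simp [G, hij, h, hsymm.apply i j]
  have hdeg : ∀ i, ∑ j, (if G.Adj i j then (1 : ℝ) else 0) = G.degree i := fun i => by
    rw [sum_boole, ← SimpleGraph.card_neighborFinset_eq_degree,
      SimpleGraph.neighborFinset_eq_filter]
  have hsum : ∑ i, ∑ j, B i j = Fintype.card ι - 2 * #G.edgeFinset := by
    simp_rw [hentry, sum_sub_distrib, hdeg]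
    rw [← Nat.cast_sum, SimpleGraph.sum_degrees_eq_twice_card_edges]
    simp
  have hedges := hirr.connected_fromRel.card_vert_le_card_edgeSet_add_one
  rw [Nat.card_eq_fintype_card, Nat.card_eq_fintype_card, ← SimpleGraph.edgeFinset_card] at hedges
  have : (Fintype.card ι : ℝ) ≤ #G.edgeFinset + 1 := by exact_mod_cast hedges
  linarith

end Matrix.IsIrreducibleMatrix

theorem stmt_17 (n : ℕ) (hn : 4 ≤ n) (B : Matrix (Fin n) (Fin n) ℝ) (hsymm : B.IsSymm)
    (hdiag : ∀ i, B i i = 1)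
    (hoff : ∀ i j, i ≠ j → -1 ≤ B i j ∧ B i j ≤ 0)
    (hirr : B.IsIrreducibleMatrix) :
    ∃ W : Submodule ℝ (Fin n → ℝ), Module.finrank ℝ W = 3 ∧
      ∀ x ∈ W, x ≠ 0 → 0 < x ⬝ᵥ (B *ᵥ x) := by
  have hB : B.IsHermitian := isHermitian_iff_isSymm.2 hsymm
  refine hB.exists_finrank_eq_forall_pos ?_
  by_contra! hfew
  have : Nonempty (Fin n) := ⟨⟨0, by omega⟩⟩
  obtain ⟨i₀, hi₀⟩ := Finite.exists_min hB.eigenvalues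
  have hray : n * hB.eigenvalues i₀ ≤ ∑ i, ∑ j, B i j := by
    simpa [mulVec, dotProduct, mul_comm] using hB.mul_dotProduct_le_dotProduct_mulVec hi₀ 1
  have hsq := hB.sum_one_sub_eigenvalues_sq hdiag
  have hent := sum_sq_add_sum_le_of_unit_diagonal hdiag hoff
  simp only [Fintype.card_fin] at hsq hent
  obtain ⟨hn4, hmin, hμsq⟩ := card_eq_four_of_sum_sq_le (μ := fun i => 1 - hB.eigenvalues i)
    (fun i => sub_le_sub_left (hi₀ i) 1) (hB.sum_one_sub_eigenvalues hdiag)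
    (by simp only [sub_lt_self_iff]; omega) (by simpa using hn)
    (by simp only [Fintype.card_fin]; linarith)
  simp only [Fintype.card_fin, sub_eq_self] at hn4 hmin
  have hn4' : (n : ℝ) = 4 := by exact_mod_cast hn4
  rw [hmin, mul_zero] at hray
  have h01 := eq_zero_or_eq_neg_one_of_sum_sq_add_sum_eq hdiag hoff
    (by rw [Fintype.card_fin]; linarith)
  have hgraph := hirr.sum_le_two_sub_card hsymm hdiag h01
  rw [Fintype.card_fin] at hgraph
  linarith
end
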